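/- arXiv:2305.04193 — 6 statements merged into one kernel-verified Lean document; each statement's English description precedes it below -/
import Mathlib

section
/- Let H be an r-graph with at least two edges, and let p = p(n) ∈ (0,1] be a function of n such that p(n)·n^r → ∞ and p(n)·n^{s(H)} → 0 as n → ∞. Then asymptotically almost surely ex(G^r_{n,p}, H) = (1+o(1))·p·C(n,r). -/
/-!
Let `F ⊆ H` attain the maximum `m(H)` and put `μ = p·C(n,r)`, which tends to infinity.
By Chebyshev, `e(G^r_{n,p}) = (1 + o(1)) μ` a.a.s. The expected number of copies of `F` is at
most `n^{v(F)} p^{e(F)} = O(μ · (p n^{s(H)})^{e(F)-1}) = o(μ)`, so by Markov there are `o(μ)`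
copies a.a.s. Deleting one edge from each copy of `F` destroys every copy of `H`, whence
`e(G) - #copies(F) ≤ ex(G, H) ≤ e(G)`.
-/

open Finset Filter

namespace Paper

/-- An `r`-graph: every edge has size `r`. -/
def IsUniform {V : Type*} (H : Finset (Finset V)) (r : ℕ) : Prop :=
  ∀ e ∈ H, e.card = r

/-- The set of vertices covered by the edges of `H`. -/
def verts {V : Type*} [DecidableEq V] (H : Finset (Finset V)) : Finset V :=
  H.sup id

/-- `c` is a copy of `F`: the image of `F` under a map injective on the vertices of `F`. -/
def IsCopyOf {V W : Type*} [DecidableEq V] [DecidableEq W]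
    (c : Finset (Finset W)) (F : Finset (Finset V)) : Prop :=
  ∃ f : V → W, Set.InjOn f ↑(verts F) ∧ c = F.image (fun e => e.image f)

/-- `H` contains a copy of `F`. -/
def ContainsCopy {V W : Type*} [DecidableEq V] [DecidableEq W]
    (H : Finset (Finset W)) (F : Finset (Finset V)) : Prop :=
  ∃ c, c ⊆ H ∧ IsCopyOf c F

open Classical in
/-- The Turán number: maximum number of edges of a subgraph of `G` with no copy of `F`. -/
noncomputable def exNum {V W : Type*} [DecidableEq V] [DecidableEq W]
    (G : Finset (Finset V)) (F : Finset (Finset W)) : ℕ :=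
  (G.powerset.filter (fun G' => ¬ ContainsCopy G' F)).sup Finset.card

/-- All possible edges of the complete `r`-graph on `Fin n`. -/
def allEdges (n r : ℕ) : Finset (Finset (Fin n)) :=
  Finset.powersetCard r Finset.univ

open Classical in
/-- Probability, under the Erdős–Rényi random `r`-graph `G^r_{n,p}`, of the event `A`. -/
noncomputable def prob (n r : ℕ) (p : ℝ) (A : Set (Finset (Finset (Fin n)))) : ℝ :=
  ∑ G ∈ (allEdges n r).powerset,
    if G ∈ A then p ^ G.card * (1 - p) ^ ((allEdges n r).card - G.card) else 0

/-- `m(H)`, the `r`-density of `H`. -/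
noncomputable def mDensity {V : Type*} [DecidableEq V] (r : ℕ) (H : Finset (Finset V)) : ℝ :=
  sSup {x : ℝ | ∃ G : Finset (Finset V), G ⊆ H ∧ 2 ≤ G.card ∧
    x = ((G.card : ℝ) - 1) / (((verts G).card : ℝ) - (r : ℝ))}

/-- `s(H) = 1/m(H)`. -/
noncomputable def sDensity {V : Type*} [DecidableEq V] (r : ℕ) (H : Finset (Finset V)) : ℝ :=
  1 / mDensity r H

/-- A tight `k`-tree. -/
def IsTightTree {V : Type*} [DecidableEq V] (k : ℕ) (T : Finset (Finset V)) : Prop :=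
  IsUniform T k ∧ ∃ (t : ℕ) (e : Fin t → Finset V), Function.Injective e ∧
    T = Finset.image e Finset.univ ∧
    ∀ i : Fin t, 0 < (i : ℕ) →
      ∃ v ∈ e i, ∃ s : Fin t, (s : ℕ) < (i : ℕ) ∧
        (∀ j : Fin t, (j : ℕ) < (i : ℕ) → v ∉ e j) ∧ e i \ {v} ⊆ e s

/-- The `r`-expansion of a hypergraph `S`: each edge `e` is enlarged with `r - |e|`
new vertices of degree one, distinct new vertices for distinct edges. -/
def expansion {V : Type*} [DecidableEq V] (r : ℕ) (S : Finset (Finset V)) :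
    Finset (Finset (V ⊕ Finset V × ℕ)) :=
  S.image (fun e =>
    e.image Sum.inl ∪ (Finset.range (r - e.card)).image (fun i => Sum.inr (e, i)))

/-- The codegree `d_H(σ)`: number of edges of `H` containing `σ`. -/
def degOf {V : Type*} [DecidableEq V] (H : Finset (Finset V)) (σ : Finset V) : ℕ :=
  (H.filter (fun e => σ ⊆ e)).card

/-- `Δ_j(S)`: the maximum over sets `J` of `j` edges of `H` of the number of members
of the collection `S` containing all edges of `J`. -/
def maxDeg {V : Type*} [DecidableEq V] (H : Finset (Finset V))
    (S : Finset (Finset (Finset V))) (j : ℕ) : ℕ :=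
  (Finset.powersetCard j H).sup (fun J => (S.filter (fun c => J ⊆ c)).card)

/-- The complete `k`-graph on `m` vertices. -/
def completeHypergraph (m k : ℕ) : Finset (Finset (Fin m)) :=
  Finset.powersetCard k Finset.univ

/-- The `r`-uniform linear cycle of length `m`. -/
def linearCycle (r m : ℕ) : Finset (Finset (ZMod (m * (r - 1)))) :=
  (Finset.range m).image (fun i =>
    (Finset.range r).image (fun j => ((i * (r - 1) + j : ℕ) : ZMod (m * (r - 1)))))

open Classical in
/-- The `r`-graph whose edges are the vertex sets of the `r`-cliques of `G`. -/
noncomputable def cliqueEdges {V : Type*} [Fintype V] (G : SimpleGraph V) (r : ℕ) :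
    Finset (Finset V) :=
  Finset.univ.filter (fun s => G.IsNClique r s)

noncomputable def weight (n r : ℕ) (p : ℝ) (G : Finset (Finset (Fin n))) : ℝ :=
  p ^ G.card * (1 - p) ^ ((allEdges n r).card - G.card)

noncomputable def expect (n r : ℕ) (p : ℝ) (X : Finset (Finset (Fin n)) → ℝ) : ℝ :=
  ∑ G ∈ (allEdges n r).powerset, weight n r p G * X G

section RandomHypergraph

variable {n r : ℕ} {p : ℝ}

lemma card_allEdges : (allEdges n r).card = n.choose r := by
  simp [allEdges]

lemma weight_nonneg (hp₀ : 0 ≤ p) (hp₁ : p ≤ 1) (G : Finset (Finset (Fin n))) :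
    0 ≤ weight n r p G :=
  mul_nonneg (pow_nonneg hp₀ _) (pow_nonneg (sub_nonneg.2 hp₁) _)

lemma prob_eq_expect (A : Set (Finset (Finset (Fin n)))) :
    prob n r p A = expect n r p (A.indicator 1) := by
  classical
  unfold prob expect weight
  refine Finset.sum_congr rfl fun G _ => ?_
  by_cases hG : G ∈ A <;> simp [hG]

lemma expect_congr {X Y : Finset (Finset (Fin n)) → ℝ}
    (h : ∀ G ⊆ allEdges n r, X G = Y G) : expect n r p X = expect n r p Y :=
  Finset.sum_congr rfl fun G hG => by rw [h G (Finset.mem_powerset.1 hG)]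

lemma expect_mono (hp₀ : 0 ≤ p) (hp₁ : p ≤ 1) {X Y : Finset (Finset (Fin n)) → ℝ}
    (h : ∀ G ⊆ allEdges n r, X G ≤ Y G) : expect n r p X ≤ expect n r p Y :=
  Finset.sum_le_sum fun G hG =>
    mul_le_mul_of_nonneg_left (h G (Finset.mem_powerset.1 hG)) (weight_nonneg hp₀ hp₁ G)

lemma expect_add (X Y : Finset (Finset (Fin n)) → ℝ) :
    expect n r p (fun G => X G + Y G) = expect n r p X + expect n r p Y := by
  simp only [expect, mul_add, Finset.sum_add_distrib]

lemma expect_const_mul (c : ℝ) (X : Finset (Finset (Fin n)) → ℝ) :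
    expect n r p (fun G => c * X G) = c * expect n r p X := by
  simp only [expect, Finset.mul_sum]
  exact Finset.sum_congr rfl fun G _ => by ring

lemma expect_sum {ι : Type*} (s : Finset ι) (X : ι → Finset (Finset (Fin n)) → ℝ) :
    expect n r p (fun G => ∑ i ∈ s, X i G) = ∑ i ∈ s, expect n r p (X i) := by
  simp only [expect, Finset.mul_sum]
  exact Finset.sum_comm

lemma expect_const (c : ℝ) : expect n r p (fun _ => c) = c := by
  rw [expect, ← Finset.sum_mul]
  simp only [weight, Finset.sum_pow_mul_eq_add_pow, add_sub_cancel, one_pow, one_mul]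

lemma expect_indicator_subset [DecidableEq (Finset (Fin n))] {c : Finset (Finset (Fin n))}
    (hc : c ⊆ allEdges n r) :
    expect n r p (fun G => if c ⊆ G then 1 else 0) = p ^ c.card := by
  set M := allEdges n r
  -- `weight G * [c ⊆ G]` factors over the potential edges, so summing it over `G ⊆ M`
  -- is expanding a product with `Finset.prod_add`.
  have hterm : ∀ G ∈ M.powerset, weight n r p G * (if c ⊆ G then 1 else 0)
      = (∏ _a ∈ G, p) * ∏ a ∈ M \ G, (if a ∈ c then 0 else 1 - p) := by
    intro G hG
    rw [Finset.mem_powerset] at hG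
    rw [weight, Finset.prod_const, ← Finset.card_sdiff_of_subset hG]
    split_ifs with hcG
    · rw [mul_one, Finset.prod_ite_of_false fun a ha hac =>
        (Finset.mem_sdiff.1 ha).2 (hcG hac), Finset.prod_const]
    · obtain ⟨a, hac, haG⟩ := Finset.not_subset.1 hcG
      rw [mul_zero, Finset.prod_eq_zero (Finset.mem_sdiff.2 ⟨hc hac, haG⟩) (if_pos hac :
        (if a ∈ c then (0 : ℝ) else 1 - p) = 0), mul_zero]
  rw [expect, Finset.sum_congr rfl hterm, ← Finset.prod_add]
  have hfactor : ∀ a ∈ M, p + (if a ∈ c then 0 else 1 - p) = if a ∈ c then p else 1 := by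
    intro a _
    split_ifs <;> ring
  rw [Finset.prod_congr rfl hfactor, Finset.prod_ite_mem, Finset.inter_eq_right.2 hc,
    Finset.prod_const]

lemma prob_le_one (hp₀ : 0 ≤ p) (hp₁ : p ≤ 1) (A : Set (Finset (Finset (Fin n)))) :
    prob n r p A ≤ 1 := by
  rw [prob_eq_expect, ← expect_const (n := n) (r := r) (p := p) 1]
  exact expect_mono hp₀ hp₁ fun G _ => Set.indicator_le_self' (fun _ _ => zero_le_one) G

/-- Markov's inequality. -/
lemma one_sub_le_prob_of_expect_le (hp₀ : 0 ≤ p) (hp₁ : p ≤ 1)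
    {X : Finset (Finset (Fin n)) → ℝ} (hX : ∀ G, 0 ≤ X G) {t b : ℝ} (ht : 0 < t)
    (hE : expect n r p X ≤ b * t) {A : Set (Finset (Finset (Fin n)))}
    (hA : ∀ G, X G ≤ t → G ∈ A) :
    1 - b ≤ prob n r p A := by
  have hpoint : ∀ G ⊆ allEdges n r, 1 + -t⁻¹ * X G ≤ A.indicator 1 G := by
    intro G _
    by_cases hGA : G ∈ A
    · have := mul_nonneg (inv_nonneg.2 ht.le) (hX G)
      rw [Set.indicator_of_mem hGA, Pi.one_apply]
      linarith
    · have hXt : t < X G := lt_of_not_ge fun h => hGA (hA G h)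
      have : 1 < t⁻¹ * X G := by rwa [← div_eq_inv_mul, one_lt_div ht]
      rw [Set.indicator_of_notMem hGA]
      linarith
  have hmarkov := expect_mono (n := n) (r := r) hp₀ hp₁ hpoint
  rw [expect_add, expect_const, expect_const_mul, ← prob_eq_expect] at hmarkov
  have : t⁻¹ * expect n r p X ≤ b := by rwa [← div_eq_inv_mul, div_le_iff₀ ht]
  linarith

lemma card_eq_sum_indicator [DecidableEq (Finset (Fin n))] {G : Finset (Finset (Fin n))}
    (hG : G ⊆ allEdges n r) :
    (G.card : ℝ) = ∑ a ∈ allEdges n r, if {a} ⊆ G then 1 else 0 := by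
  simp only [Finset.singleton_subset_iff, Finset.sum_boole, Finset.filter_mem_eq_inter,
    Finset.inter_eq_right.2 hG]

lemma expect_card : expect n r p (fun G => (G.card : ℝ)) = (allEdges n r).card * p := by
  classical
  rw [expect_congr fun G hG => card_eq_sum_indicator hG, expect_sum,
    Finset.sum_congr rfl fun a ha =>
      expect_indicator_subset (Finset.singleton_subset_iff.2 ha)]
  simp

lemma expect_card_sq :
    expect n r p (fun G => (G.card : ℝ) ^ 2)
      = (allEdges n r).card * p + (allEdges n r).card * ((allEdges n r).card - 1) * p ^ 2 := by
  classical
  set M := allEdges n r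
  have hsq : ∀ G ⊆ M,
      (G.card : ℝ) ^ 2 = ∑ a ∈ M, ∑ b ∈ M, if {a, b} ⊆ G then 1 else 0 := by
    intro G hG
    simp only [sq, card_eq_sum_indicator hG, Finset.sum_mul_sum, ite_zero_mul_ite_zero,
      Finset.singleton_subset_iff, Finset.insert_subset_iff, mul_one, M]
  have hpair : ∀ a ∈ M,
      ∑ b ∈ M, p ^ ({a, b} : Finset _).card = p + (M.card - 1) * p ^ 2 := by
    intro a ha
    rw [← Finset.add_sum_erase M _ ha, Finset.pair_eq_singleton, Finset.card_singleton,
      pow_one, Finset.sum_congr rfl fun b hb => by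
        rw [Finset.card_pair (Finset.mem_erase.1 hb).1.symm], Finset.sum_const,
      nsmul_eq_mul, Finset.cast_card_erase_of_mem ha]
  rw [expect_congr hsq, expect_sum]
  simp_rw [expect_sum]
  rw [Finset.sum_congr rfl fun a ha => Finset.sum_congr rfl fun b hb =>
    expect_indicator_subset (Finset.insert_subset_iff.2 ⟨ha, Finset.singleton_subset_iff.2 hb⟩),
    Finset.sum_congr rfl hpair, Finset.sum_const, nsmul_eq_mul]
  ring

lemma expect_card_sub_sq :
    expect n r p (fun G => ((G.card : ℝ) - (allEdges n r).card * p) ^ 2)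
      = (allEdges n r).card * p * (1 - p) := by
  have hexpand : ∀ G : Finset (Finset (Fin n)),
      ((G.card : ℝ) - (allEdges n r).card * p) ^ 2
        = (G.card : ℝ) ^ 2 + (-2 * ((allEdges n r).card * p) * G.card
          + ((allEdges n r).card * p) ^ 2) := fun G => by ring
  simp only [hexpand]
  rw [expect_add, expect_add, expect_const_mul, expect_const, expect_card, expect_card_sq]
  ring

lemma prob_add_prob_sub_one_le (hp₀ : 0 ≤ p) (hp₁ : p ≤ 1)
    {A B C : Set (Finset (Finset (Fin n)))} (h : A ∩ B ⊆ C) :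
    prob n r p A + prob n r p B - 1 ≤ prob n r p C := by
  have hpoint : ∀ G ⊆ allEdges n r, A.indicator 1 G + B.indicator 1 G
      ≤ 1 + C.indicator (1 : Finset (Finset (Fin n)) → ℝ) G := by
    intro G _
    have hC : 0 ≤ C.indicator (1 : Finset (Finset (Fin n)) → ℝ) G :=
      Set.indicator_nonneg (fun _ _ => zero_le_one) G
    by_cases hGA : G ∈ A <;> by_cases hGB : G ∈ B <;>
      simp [hGA, hGB, hC, Set.indicator_of_mem (h ⟨_, _⟩), add_nonneg zero_le_one hC]
  have := expect_mono (n := n) (r := r) hp₀ hp₁ hpoint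
  rw [expect_add, expect_add, expect_const, ← prob_eq_expect, ← prob_eq_expect,
    ← prob_eq_expect] at this
  linarith

end RandomHypergraph

section Asymptotics

variable {r : ℕ} {p : ℕ → ℝ}

lemma tendsto_prob_of_inter_subset (hp : ∀ n, 0 ≤ p n ∧ p n ≤ 1)
    {A B C : ∀ n, Set (Finset (Finset (Fin n)))}
    (hA : Tendsto (fun n => prob n r (p n) (A n)) atTop (nhds 1))
    (hB : Tendsto (fun n => prob n r (p n) (B n)) atTop (nhds 1))
    (hC : ∀ n, A n ∩ B n ⊆ C n) :
    Tendsto (fun n => prob n r (p n) (C n)) atTop (nhds 1) := by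
  have hlower := (hA.add hB).sub_const 1
  rw [show (1 : ℝ) + 1 - 1 = 1 by norm_num] at hlower
  exact tendsto_of_tendsto_of_tendsto_of_le_of_le hlower tendsto_const_nhds
    (fun n => prob_add_prob_sub_one_le (hp n).1 (hp n).2 (hC n))
    (fun n => prob_le_one (hp n).1 (hp n).2 _)

lemma tendsto_prob_of_expect_le (hp : ∀ n, 0 ≤ p n ∧ p n ≤ 1)
    {X : ∀ n, Finset (Finset (Fin n)) → ℝ} (hX : ∀ n G, 0 ≤ X n G) {t b : ℕ → ℝ}
    (hb : Tendsto b atTop (nhds 0))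
    (hE : ∀ᶠ n in atTop, 0 < t n ∧ expect n r (p n) (X n) ≤ b n * t n)
    {A : ∀ n, Set (Finset (Finset (Fin n)))} (hA : ∀ n G, X n G ≤ t n → G ∈ A n) :
    Tendsto (fun n => prob n r (p n) (A n)) atTop (nhds 1) := by
  have hlower : Tendsto (fun n => 1 - b n) atTop (nhds 1) := by
    simpa using hb.const_sub 1
  refine tendsto_of_tendsto_of_tendsto_of_le_of_le' hlower tendsto_const_nhds ?_
    (Eventually.of_forall fun n => prob_le_one (hp n).1 (hp n).2 _)
  filter_upwards [hE] with n ⟨ht, hEn⟩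
  exact one_sub_le_prob_of_expect_le (hp n).1 (hp n).2 (hX n) ht hEn (hA n)

lemma tendsto_prob_abs_card_sub_le (hp : ∀ n, 0 ≤ p n ∧ p n ≤ 1)
    (hpN : Tendsto (fun n => p n * (n.choose r : ℝ)) atTop atTop) {ε : ℝ} (hε : 0 < ε) :
    Tendsto (fun n => prob n r (p n)
      {G | |(G.card : ℝ) - p n * n.choose r| ≤ ε * (p n * n.choose r)}) atTop (nhds 1) := by
  have hb : Tendsto (fun n => (ε ^ 2 * (p n * n.choose r))⁻¹) atTop (nhds 0) :=
    (hpN.const_mul_atTop (pow_pos hε 2)).inv_tendsto_atTop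
  refine tendsto_prob_of_expect_le hp
    (X := fun n G => ((G.card : ℝ) - (allEdges n r).card * p n) ^ 2)
    (t := fun n => (ε * (p n * n.choose r)) ^ 2) (fun _ _ => sq_nonneg _) hb ?_ ?_
  · filter_upwards [hpN.eventually_gt_atTop 0] with n hμ
    refine ⟨by positivity, ?_⟩
    rw [expect_card_sub_sq, card_allEdges]
    calc (n.choose r : ℝ) * p n * (1 - p n) ≤ p n * n.choose r := by nlinarith [hp n]
      _ = (ε ^ 2 * (p n * n.choose r))⁻¹ * (ε * (p n * n.choose r)) ^ 2 := by
        field_simp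
  · intro n G hG
    rw [card_allEdges, mul_comm _ (p n)] at hG
    exact abs_le_of_sq_le_sq hG (mul_nonneg hε.le (mul_nonneg (hp n).1 (Nat.cast_nonneg _)))

end Asymptotics

section Copies

variable {V W : Type*} [DecidableEq V] [DecidableEq W]

open Classical in
noncomputable def copyCount (G : Finset (Finset W)) (F : Finset (Finset V)) : ℕ :=
  (G.powerset.filter (fun c => IsCopyOf c F)).card

lemma subset_verts {F : Finset (Finset V)} {e : Finset V} (he : e ∈ F) : e ⊆ verts F :=
  Finset.le_sup (f := id) he

lemma lt_card_verts {r : ℕ} {F : Finset (Finset V)} (hF : IsUniform F r) (hF2 : 2 ≤ F.card) :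
    r < (verts F).card := by
  obtain ⟨e₁, he₁, e₂, he₂, hne⟩ := Finset.one_lt_card.1 hF2
  by_contra! hle
  have h₁ := Finset.eq_of_subset_of_card_le (subset_verts he₁) (hle.trans (hF e₁ he₁).ge)
  have h₂ := Finset.eq_of_subset_of_card_le (subset_verts he₂) (hle.trans (hF e₂ he₂).ge)
  exact hne (h₁.trans h₂.symm)

lemma IsCopyOf.card_eq {c : Finset (Finset W)} {F : Finset (Finset V)} (h : IsCopyOf c F) :
    c.card = F.card := by
  obtain ⟨f, hf, rfl⟩ := h
  exact Finset.card_image_of_injOn fun e₁ he₁ e₂ he₂ =>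
    (Finset.image_eq_image_iff_of_injOn hf (subset_verts he₁) (subset_verts he₂)).1

lemma ContainsCopy.of_subset_right {G : Finset (Finset W)} {F H : Finset (Finset V)}
    (h : ContainsCopy G H) (hFH : F ⊆ H) : ContainsCopy G F := by
  obtain ⟨c, hcG, f, hf, rfl⟩ := h
  exact ⟨F.image fun e => e.image f, (Finset.image_subset_image hFH).trans hcG, f,
    hf.mono (Finset.coe_subset.2 (Finset.sup_mono hFH)), rfl⟩

lemma exNum_le_card (G : Finset (Finset W)) (H : Finset (Finset V)) : exNum G H ≤ G.card := by
  classical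
  exact Finset.sup_le fun _ hc =>
    Finset.card_le_card (Finset.mem_powerset.1 (Finset.mem_filter.1 hc).1)

/-- Deleting one edge from every copy of `F` leaves a subgraph with no copy of `H ⊇ F`. -/
lemma card_le_exNum_add_copyCount (G : Finset (Finset W)) {F H : Finset (Finset V)}
    (hFH : F ⊆ H) (hF : F.Nonempty) : G.card ≤ exNum G H + copyCount G F := by
  classical
  set D := G.powerset.filter fun c => IsCopyOf c F
  have hD : ∀ c : D, (c : Finset (Finset W)).Nonempty := fun c => by
    obtain ⟨f, -, hc⟩ := (Finset.mem_filter.1 c.2).2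
    exact hc ▸ hF.image _
  choose pick hpick using hD
  set G' := G \ D.attach.image pick
  have hG'free : ¬ ContainsCopy G' H := by
    intro hG'H
    obtain ⟨c, hcG', hc⟩ := hG'H.of_subset_right hFH
    have hcD : c ∈ D := Finset.mem_filter.2
      ⟨Finset.mem_powerset.2 (hcG'.trans Finset.sdiff_subset), hc⟩
    exact (Finset.mem_sdiff.1 (hcG' (hpick ⟨c, hcD⟩))).2
      (Finset.mem_image_of_mem _ (Finset.mem_attach _ _))
  have hG'ex : G'.card ≤ exNum G H := Finset.le_sup (f := Finset.card)
    (Finset.mem_filter.2 ⟨Finset.mem_powerset.2 Finset.sdiff_subset, hG'free⟩)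
  calc G.card ≤ G'.card + (D.attach.image pick).card := Finset.card_le_card_sdiff_add_card
    _ ≤ exNum G H + copyCount G F :=
      add_le_add hG'ex (Finset.card_image_le.trans (Finset.card_attach).le)

lemma copyCount_le_card_pow [Fintype W] (G : Finset (Finset W)) (F : Finset (Finset V)) :
    copyCount G F ≤ Fintype.card W ^ (verts F).card := by
  classical
  set D := G.powerset.filter fun c => IsCopyOf c F
  choose f _ hcf using fun c : D => (Finset.mem_filter.1 c.2).2
  have hinj : Function.Injective fun (c : D) (x : verts F) => f c x := by
    intro c c' hcc
    refine Subtype.ext ?_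
    rw [hcf c, hcf c']
    exact Finset.image_congr fun e he => Finset.image_congr fun x hx =>
      congrFun hcc ⟨x, subset_verts he hx⟩
  calc copyCount G F = Fintype.card D := (Fintype.card_coe D).symm
    _ ≤ Fintype.card (verts F → W) := Fintype.card_le_of_injective _ hinj
    _ = Fintype.card W ^ (verts F).card := by simp

lemma expect_copyCount {n r : ℕ} {p : ℝ} (F : Finset (Finset V)) :
    expect n r p (fun G => (copyCount G F : ℝ)) = copyCount (allEdges n r) F * p ^ F.card := by
  classical
  set D := (allEdges n r).powerset.filter fun c => IsCopyOf c F
  have hcount : ∀ G ⊆ allEdges n r,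
      (copyCount G F : ℝ) = ∑ c ∈ D, if c ⊆ G then 1 else 0 := by
    intro G hG
    rw [Finset.sum_boole, Finset.filter_filter, copyCount]
    congr 2
    ext c
    simp only [Finset.mem_filter, Finset.mem_powerset]
    exact ⟨fun ⟨hcG, hc⟩ => ⟨hcG.trans hG, hc, hcG⟩,
      fun ⟨_, hc, hcG⟩ => ⟨hcG, hc⟩⟩
  rw [expect_congr hcount, expect_sum, Finset.sum_congr rfl fun c hc => by
    rw [expect_indicator_subset (Finset.mem_powerset.1 (Finset.mem_filter.1 hc).1),
      (Finset.mem_filter.1 hc).2.card_eq], Finset.sum_const, nsmul_eq_mul, copyCount]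

end Copies

section Density

variable {V : Type*} [DecidableEq V]

lemma exists_subset_mDensity_eq (r : ℕ) {H : Finset (Finset V)} (hH2 : 2 ≤ H.card) :
    ∃ F ⊆ H, 2 ≤ F.card ∧
      mDensity r H = ((F.card : ℝ) - 1) / (((verts F).card : ℝ) - r) := by
  set S := {x : ℝ | ∃ G : Finset (Finset V), G ⊆ H ∧ 2 ≤ G.card ∧
    x = ((G.card : ℝ) - 1) / (((verts G).card : ℝ) - (r : ℝ))}
  have hfin : S.Finite := by
    refine ((H.powerset : Set (Finset (Finset V))).toFinite.image
      fun G => ((G.card : ℝ) - 1) / (((verts G).card : ℝ) - r)).subset ?_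
    rintro x ⟨G, hGH, -, rfl⟩
    exact ⟨G, Finset.mem_powerset.2 hGH, rfl⟩
  obtain ⟨F, hFH, hF2, hF⟩ : mDensity r H ∈ S :=
    Set.Nonempty.csSup_mem ⟨_, H, subset_rfl, hH2, rfl⟩ hfin
  exact ⟨F, hFH, hF2, hF⟩

lemma exists_subset_sDensity_mul_eq {r : ℕ} {H : Finset (Finset V)} (hH : IsUniform H r)
    (hH2 : 2 ≤ H.card) :
    ∃ F ⊆ H, 2 ≤ F.card ∧ r < (verts F).card ∧
      sDensity r H * ((F.card - 1 : ℕ) : ℝ) = ((verts F).card - r : ℕ) := by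
  obtain ⟨F, hFH, hF2, hm⟩ := exists_subset_mDensity_eq r hH2
  have hrF := lt_card_verts (fun e he => hH e (hFH he)) hF2
  refine ⟨F, hFH, hF2, hrF, ?_⟩
  have hF1 : (1 : ℝ) < F.card := by exact_mod_cast hF2
  rw [sDensity, hm, Nat.cast_sub (by omega), Nat.cast_sub hrF.le, Nat.cast_one, one_div_div,
    div_mul_cancel₀ _ (by linarith)]

end Density

lemma exists_pow_le_mul_choose (r : ℕ) :
    ∃ C > 0, ∀ᶠ n : ℕ in atTop, (n : ℝ) ^ r ≤ C * n.choose r := by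
  obtain ⟨C, hC, h⟩ := (isTheta_choose r).2.exists_pos
  refine ⟨C, hC, h.bound.mono fun n hn => ?_⟩
  simpa using hn

lemma tendsto_mul_choose_atTop {r : ℕ} {p : ℕ → ℝ} (hp : ∀ n, 0 ≤ p n)
    (h1 : Tendsto (fun n => p n * (n : ℝ) ^ r) atTop atTop) :
    Tendsto (fun n => p n * (n.choose r : ℝ)) atTop atTop := by
  obtain ⟨C, hC, hle⟩ := exists_pow_le_mul_choose r
  refine tendsto_atTop_mono' atTop ?_ (h1.atTop_div_const hC)
  filter_upwards [hle] with n hn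
  rw [div_le_iff₀ hC]
  nlinarith [mul_le_mul_of_nonneg_left hn (hp n)]

lemma tendsto_prob_copyCount_le {V : Type*} [DecidableEq V] {r : ℕ} {p : ℕ → ℝ}
    (hp : ∀ n, 0 ≤ p n ∧ p n ≤ 1) {F : Finset (Finset V)} (hF2 : 2 ≤ F.card)
    (hrF : r ≤ (verts F).card) {s : ℝ}
    (hs : s * ((F.card - 1 : ℕ) : ℝ) = ((verts F).card - r : ℕ))
    (h2 : Tendsto (fun n : ℕ => p n * (n : ℝ) ^ s) atTop (nhds 0))
    (hpN : ∀ᶠ n in atTop, 0 < p n * (n.choose r : ℝ)) {ε : ℝ} (hε : 0 < ε) :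
    Tendsto (fun n => prob n r (p n)
      {G | (copyCount G F : ℝ) ≤ ε * (p n * n.choose r)}) atTop (nhds 1) := by
  obtain ⟨C, hC, hle⟩ := exists_pow_le_mul_choose r
  set k := F.card - 1
  have hb : Tendsto (fun n => C / ε * (p n * (n : ℝ) ^ s) ^ k) atTop (nhds 0) := by
    simpa [k, zero_pow (show k ≠ 0 by omega)] using (h2.pow k).const_mul (C / ε)
  refine tendsto_prob_of_expect_le hp (fun _ _ => Nat.cast_nonneg _) hb ?_ fun _ _ => id
  filter_upwards [hpN, hle] with n hμ hn
  refine ⟨by positivity, ?_⟩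
  have hcopies : (copyCount (allEdges n r) F : ℝ) ≤ (n : ℝ) ^ (verts F).card := by
    exact_mod_cast (copyCount_le_card_pow (allEdges n r) F).trans_eq (by simp)
  have hpow : (p n * (n : ℝ) ^ s) ^ k = p n ^ k * (n : ℝ) ^ ((verts F).card - r) := by
    rw [mul_pow, ← Real.rpow_natCast ((n : ℝ) ^ s), ← Real.rpow_mul n.cast_nonneg, hs,
      Real.rpow_natCast]
  have hsplit : (n : ℝ) ^ (verts F).card * p n ^ F.card
      = p n ^ k * (n : ℝ) ^ ((verts F).card - r) * p n * (n : ℝ) ^ r := by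
    rw [show F.card = k + 1 by omega, pow_succ, ← Nat.sub_add_cancel hrF, pow_add,
      Nat.add_sub_cancel]
    ring
  have hp0 := (hp n).1
  calc expect n r (p n) (fun G => (copyCount G F : ℝ))
      ≤ (n : ℝ) ^ (verts F).card * p n ^ F.card := by
        rw [expect_copyCount]; gcongr
    _ ≤ p n ^ k * (n : ℝ) ^ ((verts F).card - r) * p n * (C * n.choose r) := by
        rw [hsplit]; gcongr
    _ = C / ε * (p n * (n : ℝ) ^ s) ^ k * (ε * (p n * n.choose r)) := by
        rw [hpow]; field_simp

theorem statement_9 {V : Type} [DecidableEq V] (r : ℕ) (H : Finset (Finset V))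
    (hH : IsUniform H r) (hH2 : 2 ≤ H.card)
    (p : ℕ → ℝ) (hp : ∀ n, 0 < p n ∧ p n ≤ 1)
    (h1 : Tendsto (fun n : ℕ => p n * (n : ℝ) ^ r) atTop atTop)
    (h2 : Tendsto (fun n : ℕ => p n * (n : ℝ) ^ sDensity r H) atTop (nhds 0)) :
    ∀ ε : ℝ, 0 < ε →
      Tendsto (fun n : ℕ => prob n r (p n)
        {G | |(exNum G H : ℝ) - p n * (n.choose r : ℝ)| ≤ ε * (p n * (n.choose r : ℝ))})
        atTop (nhds 1) := by
  intro ε hε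
  have hp' : ∀ n, 0 ≤ p n ∧ p n ≤ 1 := fun n => ⟨(hp n).1.le, (hp n).2⟩
  obtain ⟨F, hFH, hF2, hrF, hs⟩ := exists_subset_sDensity_mul_eq hH hH2
  have hpN := tendsto_mul_choose_atTop (fun n => (hp' n).1) h1
  have hedges := tendsto_prob_abs_card_sub_le hp' hpN (half_pos hε)
  have hcopies := tendsto_prob_copyCount_le hp' hF2 hrF.le hs h2 (hpN.eventually_gt_atTop 0)
    (half_pos hε)
  refine tendsto_prob_of_inter_subset hp' hedges hcopies fun n G ⟨hcard, hcount⟩ => ?_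
  have hupper : (exNum G H : ℝ) ≤ G.card := by exact_mod_cast exNum_le_card G H
  have hlower : (G.card : ℝ) ≤ exNum G H + copyCount G F := by
    exact_mod_cast card_le_exNum_add_copyCount G hFH (Finset.card_pos.1 (by omega))
  have hμ : 0 ≤ p n * (n.choose r : ℝ) := mul_nonneg (hp' n).1 (Nat.cast_nonneg _)
  rw [Set.mem_ofPred_eq, abs_le] at hcard ⊢
  rw [Set.mem_ofPred_eq] at hcount
  constructor <;> linarith [hcard.1, hcard.2]

end Paper
end

section
/- Let r > k ≥ 2 be integers and let G be a simple graph with the following property: for any t with k < t ≤ r, any subgraph G₁ of G isomorphic to K_k, any subgraph G₂ of G isomorphic to K_t with G₁ ⊆ G₂, and any subgraph G₃ of G isomorphic to K_r with G₁ ⊆ G₃, one has G₂ ⊆ G₃. Let H be the r-graph on the vertex set of G whose edges are exactly the vertex sets of the subgraphs of G isomorphic to K_r. Then: (i) any two distinct edges of H intersect in at most k−1 vertices; and (ii) H contains no subgraph isomorphic to K_{k+1}^{k(+r)}. -/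
open Finset Filter

namespace Paper

theorem statement_12 {V : Type} [Fintype V] [DecidableEq V] (r k : ℕ)
    (hk : 2 ≤ k) (hkr : k < r) (G : SimpleGraph V)
    (hprop : ∀ t : ℕ, k < t → t ≤ r → ∀ s1 s2 s3 : Finset V,
      G.IsNClique k s1 → G.IsNClique t s2 → s1 ⊆ s2 → G.IsNClique r s3 → s1 ⊆ s3 → s2 ⊆ s3) :
    (∀ e1 ∈ cliqueEdges G r, ∀ e2 ∈ cliqueEdges G r, e1 ≠ e2 → (e1 ∩ e2).card ≤ k - 1) ∧
    ¬ ContainsCopy (cliqueEdges G r) (expansion r (completeHypergraph (k + 1) k)) := by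
  classical
  have hmem : ∀ e, e ∈ cliqueEdges G r ↔ G.IsNClique r e := by
    intro e; simp [cliqueEdges]
  constructor
  · intro e1 h1 e2 h2 hne
    rw [hmem] at h1 h2
    by_contra hcon
    push_neg at hcon
    have hk' : k ≤ (e1 ∩ e2).card := by omega
    obtain ⟨s1, hs1sub, hs1card⟩ := Finset.exists_subset_card_eq hk'
    have hs1e1 : s1 ⊆ e1 := hs1sub.trans Finset.inter_subset_left
    have hs1e2 : s1 ⊆ e2 := hs1sub.trans Finset.inter_subset_right
    have hs1cl : G.IsNClique k s1 := ⟨h1.1.subset (Finset.coe_subset.2 hs1e1), hs1card⟩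
    have hsub := hprop r hkr le_rfl s1 e1 e2 hs1cl h1 hs1e1 h2 hs1e2
    exact hne (Finset.eq_of_subset_of_card_le hsub (by rw [h1.2, h2.2]))
  · rintro ⟨c, hc, f, hinj, hceq⟩
    -- abbreviations
    have hed : ∀ i : Fin (k+1), (Finset.univ.erase i).card = k := by
      intro i
      rw [Finset.card_erase_of_mem (Finset.mem_univ i), Finset.card_univ, Fintype.card_fin]; omega
    have hedmem : ∀ i : Fin (k+1), Finset.univ.erase i ∈ completeHypergraph (k+1) k := by
      intro i
      simp [completeHypergraph, Finset.mem_powersetCard, hed i]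
    set F := expansion r (completeHypergraph (k+1) k) with hFdef
    set X : Fin (k+1) → Finset (Fin (k+1) ⊕ Finset (Fin (k+1)) × ℕ) :=
      fun i => (Finset.univ.erase i).image Sum.inl ∪
        (Finset.range (r - k)).image (fun n => Sum.inr (Finset.univ.erase i, n)) with hXdef
    have hXF : ∀ i, X i ∈ F := by
      intro i
      rw [hFdef, expansion]
      refine Finset.mem_image.2 ⟨Finset.univ.erase i, hedmem i, ?_⟩
      rw [hed i]
    have hinlX : ∀ i j : Fin (k+1), j ≠ i → Sum.inl j ∈ X i := by
      intro i j hji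
      exact Finset.mem_union.2 (Or.inl (Finset.mem_image_of_mem _
        (Finset.mem_erase.2 ⟨hji, Finset.mem_univ j⟩)))
    have hXvert : ∀ i, X i ⊆ verts F := by
      intro i a ha
      exact Finset.mem_sup.2 ⟨X i, hXF i, ha⟩
    have hnontriv : Nontrivial (Fin (k+1)) := Fin.nontrivial_iff_two_le.2 (by omega)
    have hinlvert : ∀ j : Fin (k+1), Sum.inl j ∈ verts F := by
      intro j
      obtain ⟨i, hij⟩ := exists_ne j
      exact hXvert i (hinlX i j hij.symm)
    have hx : ∀ i j : Fin (k+1), f (Sum.inl i) = f (Sum.inl j) → i = j := by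
      intro i j h
      exact Sum.inl.inj (hinj (Finset.mem_coe.2 (hinlvert i)) (Finset.mem_coe.2 (hinlvert j)) h)
    have hCl : ∀ i, G.IsNClique r ((X i).image f) := by
      intro i
      rw [← hmem]
      exact hc (hceq ▸ Finset.mem_image_of_mem _ (hXF i))
    set S : Finset V := Finset.univ.image (fun j : Fin (k+1) => f (Sum.inl j)) with hSdef
    have hScard : S.card = k + 1 := by
      rw [hSdef, Finset.card_image_of_injOn (fun a _ b _ h => hx a b h),
        Finset.card_univ, Fintype.card_fin]
    have hSclique : G.IsNClique (k+1) S := by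
      constructor
      · intro a ha b hb hab
        rw [Finset.mem_coe, hSdef, Finset.mem_image] at ha hb
        obtain ⟨i, -, rfl⟩ := ha
        obtain ⟨j, -, rfl⟩ := hb
        have hij : i ≠ j := fun h => hab (by rw [h])
        have : (({i, j} : Finset (Fin (k+1)))ᶜ).Nonempty := by
          rw [← Finset.card_pos, Finset.card_compl, Fintype.card_fin]
          have h2 : ({i, j} : Finset (Fin (k+1))).card ≤ 2 :=
            (Finset.card_insert_le _ _).trans (by simp)
          omega
        obtain ⟨l, hl⟩ := this
        rw [Finset.mem_compl, Finset.mem_insert, Finset.mem_singleton] at hl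
        push_neg at hl
        exact (hCl l).1 (Finset.mem_coe.2 (Finset.mem_image_of_mem f (hinlX l i (Ne.symm hl.1))))
          (Finset.mem_coe.2 (Finset.mem_image_of_mem f (hinlX l j (Ne.symm hl.2)))) hab
      · exact hScard
    have hx0S : f (Sum.inl 0) ∈ S := Finset.mem_image_of_mem _ (Finset.mem_univ _)
    set s1 : Finset V := S.erase (f (Sum.inl 0)) with hs1def
    have hs1card : s1.card = k := by
      rw [hs1def, Finset.card_erase_of_mem hx0S, hScard]; omega
    have hs1sub : s1 ⊆ (X 0).image f := by
      intro a ha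
      rw [hs1def, Finset.mem_erase] at ha
      obtain ⟨hane, haS⟩ := ha
      rw [hSdef, Finset.mem_image] at haS
      obtain ⟨j, -, rfl⟩ := haS
      have hj0 : j ≠ 0 := fun h => hane (by rw [h])
      exact Finset.mem_image_of_mem f (hinlX 0 j hj0)
    have hs1cl : G.IsNClique k s1 :=
      ⟨hSclique.1.subset (Finset.coe_subset.2 (Finset.erase_subset _ _)), hs1card⟩
    have hSsub := hprop (k+1) (by omega) (by omega) s1 S ((X 0).image f)
      hs1cl hSclique (Finset.erase_subset _ _) (hCl 0) hs1sub
    have : f (Sum.inl 0) ∈ (X 0).image f := hSsub hx0S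
    obtain ⟨a, haX, hfa⟩ := Finset.mem_image.1 this
    have ha0 : a = Sum.inl 0 :=
      hinj (Finset.mem_coe.2 (hXvert 0 haX)) (Finset.mem_coe.2 (hinlvert 0)) hfa
    rw [ha0] at haX
    simp [hXdef, Finset.mem_union, Finset.mem_image] at haX

end Paper
end

section
/- Let r > k ≥ 2 be integers and let H be an r-graph on a vertex set W such that any two distinct edges of H intersect in at most k−1 vertices and H contains no subgraph isomorphic to K_{k+1}^{k(+r)}. Let H' be a blowup of H: each vertex w ∈ W is replaced by a nonempty finite set V_w, the sets V_w being pairwise disjoint; let f map each v ∈ V_w to w; and a set {v₁,…,v_r} of r vertices is an edge of H' if and only if {f(v₁),…,f(v_r)} consists of r distinct vertices and is an edge of H. If H' contains a subgraph G isomorphic to K_{k+1}^{k(+r)}, then f(e₁) = f(e₂) for all edges e₁, e₂ of G, where f(e) denotes the image of the edge e under f. -/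
open Finset Filter

namespace Paper

private def exEdge (k r : ℕ) (S : Finset (Fin (k+1))) :
    Finset (Fin (k+1) ⊕ Finset (Fin (k+1)) × ℕ) :=
  S.image Sum.inl ∪ (Finset.range (r-k)).image (fun i => Sum.inr (S, i))

private lemma mem_exEdge_inl {k r : ℕ} {S : Finset (Fin (k+1))} {i : Fin (k+1)} :
    Sum.inl i ∈ exEdge k r S ↔ i ∈ S := by
  simp [exEdge]

private lemma mem_exEdge_inr {k r : ℕ} {S T : Finset (Fin (k+1))} {j : ℕ} :
    Sum.inr (T, j) ∈ exEdge k r S ↔ T = S ∧ j < r - k := by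
  simp only [exEdge, Finset.mem_union, Finset.mem_image, Finset.mem_range]
  constructor
  · rintro (⟨a, _, hc⟩ | ⟨a, ha, hc⟩)
    · exact absurd hc (by simp)
    · obtain ⟨h1, h2⟩ := Prod.mk.injEq .. ▸ Sum.inr.inj hc
      exact ⟨h1.symm, h2 ▸ ha⟩
  · rintro ⟨rfl, hj⟩
    exact Or.inr ⟨j, hj, rfl⟩

private lemma mem_completeHypergraph' {k : ℕ} {S : Finset (Fin (k+1))} :
    S ∈ completeHypergraph (k+1) k ↔ S.card = k := by
  simp [completeHypergraph, Finset.mem_powersetCard]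

private lemma expansion_complete_eq {k r : ℕ} :
    expansion r (completeHypergraph (k+1) k)
      = (completeHypergraph (k+1) k).image (exEdge k r) := by
  unfold expansion
  apply Finset.image_congr
  intro S hS
  rw [Finset.mem_coe, mem_completeHypergraph'] at hS
  simp [exEdge, hS]

private lemma mem_verts_expansion {k r : ℕ} {x : Fin (k+1) ⊕ Finset (Fin (k+1)) × ℕ} :
    x ∈ verts (expansion r (completeHypergraph (k+1) k)) ↔
      ∃ S : Finset (Fin (k+1)), S.card = k ∧ x ∈ exEdge k r S := by
  rw [expansion_complete_eq]
  simp only [verts, Finset.mem_sup, Finset.mem_image, id_eq]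
  constructor
  · rintro ⟨v, ⟨S, hS, rfl⟩, hx⟩
    exact ⟨S, mem_completeHypergraph'.mp hS, hx⟩
  · rintro ⟨S, hS, hx⟩
    exact ⟨exEdge k r S, ⟨S, mem_completeHypergraph'.mpr hS, rfl⟩, hx⟩

private lemma exEdge_subset_verts {k r : ℕ} {S : Finset (Fin (k+1))} (hS : S.card = k) :
    exEdge k r S ⊆ verts (expansion r (completeHypergraph (k+1) k)) :=
  fun _ hx => mem_verts_expansion.mpr ⟨S, hS, hx⟩

private lemma card_inter_of_ne {k : ℕ} {S T : Finset (Fin (k+1))}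
    (hS : S.card = k) (hT : T.card = k) (hne : S ≠ T) :
    (S ∩ T).card = k - 1 ∧ S ∪ T = Finset.univ := by
  have h1 : (S ∩ T).card + (S ∪ T).card = 2 * k := by
    rw [Finset.card_inter_add_card_union, hS, hT]; ring
  have h2 : (S ∪ T).card ≤ k + 1 := by
    have := Finset.card_le_card (Finset.subset_univ (S ∪ T))
    simpa using this
  have h3 : (S ∩ T).card < k := by
    rcases lt_or_eq_of_le (hS ▸ Finset.card_le_card (Finset.inter_subset_left : S ∩ T ⊆ S)) with h | h
    · exact h
    · exfalso
      have hiS : S ∩ T = S :=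
        Finset.eq_of_subset_of_card_le Finset.inter_subset_left (le_of_eq (hS.trans h.symm))
      have hsub : S ⊆ T := by
        intro x hx
        have : x ∈ S ∩ T := hiS.symm ▸ hx
        exact Finset.mem_of_mem_inter_right this
      exact hne (Finset.eq_of_subset_of_card_le hsub (by omega))
  have h5 : (S ∪ T).card = k + 1 := by omega
  refine ⟨by omega, Finset.eq_univ_of_card _ (by simpa using h5)⟩

theorem statement_13 {W V' : Type} [DecidableEq W] [DecidableEq V'] [Fintype V']
    (r k : ℕ) (hk : 2 ≤ k) (hkr : k < r)
    (H : Finset (Finset W)) (hU : IsUniform H r)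
    (hint : ∀ e1 ∈ H, ∀ e2 ∈ H, e1 ≠ e2 → (e1 ∩ e2).card ≤ k - 1)
    (hfree : ¬ ContainsCopy H (expansion r (completeHypergraph (k + 1) k)))
    (f : V' → W) (hsurj : Function.Surjective f)
    (H' : Finset (Finset V'))
    (hH' : ∀ s : Finset V', s ∈ H' ↔ s.card = r ∧ (s.image f).card = r ∧ s.image f ∈ H)
    (c : Finset (Finset V')) (hc : c ⊆ H')
    (hcopy : IsCopyOf c (expansion r (completeHypergraph (k + 1) k))) :
    ∀ e1 ∈ c, ∀ e2 ∈ c, e1.image f = e2.image f := by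
  classical
  obtain ⟨g, hginj, hceq⟩ := hcopy
  set h := f ∘ g with hh
  -- membership of c
  have hc_mem : ∀ a ∈ c, ∃ S : Finset (Fin (k+1)), S.card = k ∧ a = (exEdge k r S).image g := by
    intro a ha
    rw [hceq, expansion_complete_eq, Finset.image_image] at ha
    obtain ⟨S, hS, rfl⟩ := Finset.mem_image.mp ha
    exact ⟨S, mem_completeHypergraph'.mp hS, rfl⟩
  have hc_mem' : ∀ S : Finset (Fin (k+1)), S.card = k → (exEdge k r S).image g ∈ c := by
    intro S hS
    rw [hceq, expansion_complete_eq, Finset.image_image]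
    exact Finset.mem_image_of_mem _ (mem_completeHypergraph'.mpr hS)
  have hEf : ∀ S : Finset (Fin (k+1)),
      ((exEdge k r S).image g).image f = (exEdge k r S).image h := by
    intro S; rw [Finset.image_image]
  have hEH : ∀ S : Finset (Fin (k+1)), S.card = k → (exEdge k r S).image h ∈ H := by
    intro S hS
    have := ((hH' _).mp (hc (hc_mem' S hS))).2.2
    rwa [hEf] at this
  have hinjEdge : ∀ S : Finset (Fin (k+1)), S.card = k → Set.InjOn h ↑(exEdge k r S) := by
    intro S hS
    have hmem := (hH' _).mp (hc (hc_mem' S hS))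
    have hginjS : Set.InjOn g ↑(exEdge k r S) :=
      hginj.mono (Finset.coe_subset.mpr (exEdge_subset_verts hS))
    have hfinj : Set.InjOn f ↑((exEdge k r S).image g) := by
      rw [← Finset.card_image_iff]
      rw [hmem.2.1, hmem.1]
    intro x hx y hy hxy
    exact hginjS hx hy (hfinj (Finset.mem_coe.mpr (Finset.mem_image_of_mem g hx))
      (Finset.mem_coe.mpr (Finset.mem_image_of_mem g hy)) hxy)
  have hmemE : ∀ (S : Finset (Fin (k+1))) (x : Fin (k+1) ⊕ Finset (Fin (k+1)) × ℕ),
      x ∈ exEdge k r S → h x ∈ (exEdge k r S).image h :=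
    fun S x hx => Finset.mem_image_of_mem h hx
  -- injectivity of the core images
  have hwinj : ∀ i j : Fin (k+1), h (Sum.inl i) = h (Sum.inl j) → i = j := by
    intro i j hij
    by_contra hne
    obtain ⟨l, hl⟩ : ∃ l : Fin (k+1), l ∉ ({i, j} : Finset (Fin (k+1))) := by
      have hcard : (({i, j} : Finset (Fin (k+1)))ᶜ).Nonempty := by
        rw [← Finset.card_pos, Finset.card_compl]
        have h2 : ({i, j} : Finset (Fin (k+1))).card ≤ 2 :=
          (Finset.card_insert_le _ _).trans (by simp)
        have := Fintype.card_fin (k+1)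
        omega
      obtain ⟨l, hl⟩ := hcard
      exact ⟨l, Finset.mem_compl.mp hl⟩
    simp only [Finset.mem_insert, Finset.mem_singleton, not_or] at hl
    have hScard : (Finset.univ \ {l} : Finset (Fin (k+1))).card = k := by
      rw [Finset.card_sdiff_of_subset (Finset.singleton_subset_iff.mpr (Finset.mem_univ l))]
      simp
    have hiS : (Sum.inl i : Fin (k+1) ⊕ Finset (Fin (k+1)) × ℕ) ∈ exEdge k r (Finset.univ \ {l}) :=
      mem_exEdge_inl.mpr (by simp [Ne.symm hl.1])
    have hjS : (Sum.inl j : Fin (k+1) ⊕ Finset (Fin (k+1)) × ℕ) ∈ exEdge k r (Finset.univ \ {l}) :=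
      mem_exEdge_inl.mpr (by simp [Ne.symm hl.2])
    exact hne (Sum.inl.inj (hinjEdge _ hScard (Finset.mem_coe.mpr hiS) (Finset.mem_coe.mpr hjS) hij))
  have hwInj : Function.Injective (fun i : Fin (k+1) => h (Sum.inl i)) := fun i j => hwinj i j
  -- the intersection of distinct images
  have hintcard : ∀ S T : Finset (Fin (k+1)), S.card = k → T.card = k → S ≠ T →
      (exEdge k r S).image h ≠ (exEdge k r T).image h →
      (exEdge k r S).image h ∩ (exEdge k r T).image h
        = (S ∩ T).image (fun i => h (Sum.inl i)) := by
    intro S T hS hT hST hEE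
    have h1 : (S ∩ T).image (fun i => h (Sum.inl i)) ⊆
        (exEdge k r S).image h ∩ (exEdge k r T).image h := by
      intro x hx
      obtain ⟨i, hi, rfl⟩ := Finset.mem_image.mp hx
      exact Finset.mem_inter.mpr
        ⟨hmemE S _ (mem_exEdge_inl.mpr (Finset.mem_of_mem_inter_left hi)),
         hmemE T _ (mem_exEdge_inl.mpr (Finset.mem_of_mem_inter_right hi))⟩
    have h2 : ((exEdge k r S).image h ∩ (exEdge k r T).image h).card ≤ k - 1 :=
      hint _ (hEH S hS) _ (hEH T hT) hEE
    have h3 : ((S ∩ T).image (fun i => h (Sum.inl i))).card = k - 1 := by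
      rw [Finset.card_image_of_injective _ hwInj, (card_inter_of_ne hS hT hST).1]
    exact (Finset.eq_of_subset_of_card_le h1 (by omega)).symm
  -- two equal images plus one different is impossible
  have claim2 : ∀ S T R : Finset (Fin (k+1)), S.card = k → T.card = k → R.card = k →
      S ≠ T → (exEdge k r S).image h = (exEdge k r T).image h →
      (exEdge k r R).image h ≠ (exEdge k r S).image h → False := by
    intro S T R hS hT hR hST hEE hRE
    have hsub : R.image (fun i => h (Sum.inl i)) ⊆
        (exEdge k r S).image h ∩ (exEdge k r R).image h := by
      intro x hx
      obtain ⟨i, hi, rfl⟩ := Finset.mem_image.mp hx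
      refine Finset.mem_inter.mpr ⟨?_, hmemE R _ (mem_exEdge_inl.mpr hi)⟩
      have hiu : i ∈ S ∪ T := by
        rw [(card_inter_of_ne hS hT hST).2]; exact Finset.mem_univ i
      rcases Finset.mem_union.mp hiu with hiS | hiT
      · exact hmemE S _ (mem_exEdge_inl.mpr hiS)
      · rw [hEE]; exact hmemE T _ (mem_exEdge_inl.mpr hiT)
    have h1 : k ≤ ((exEdge k r S).image h ∩ (exEdge k r R).image h).card := by
      have := Finset.card_le_card hsub
      rwa [Finset.card_image_of_injective _ hwInj, hR] at this
    have h2 : ((exEdge k r S).image h ∩ (exEdge k r R).image h).card ≤ k - 1 :=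
      hint _ (hEH S hS) _ (hEH R hR) (Ne.symm hRE)
    omega
  -- all pairwise distinct is impossible
  have claim1 : ¬ (∀ S T : Finset (Fin (k+1)), S.card = k → T.card = k → S ≠ T →
      (exEdge k r S).image h ≠ (exEdge k r T).image h) := by
    intro hdist
    have hB : ∀ (S : Finset (Fin (k+1))) (j : ℕ) (i : Fin (k+1)), S.card = k → j < r - k →
        h (Sum.inr (S, j)) ≠ h (Sum.inl i) := by
      intro S j i hS hj heq
      by_cases hiS : i ∈ S
      · have hne : (Sum.inr (S, j) : Fin (k+1) ⊕ Finset (Fin (k+1)) × ℕ) ≠ Sum.inl i := by simp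
        exact hne (hinjEdge S hS
          (Finset.mem_coe.mpr (mem_exEdge_inr.mpr ⟨rfl, hj⟩))
          (Finset.mem_coe.mpr (mem_exEdge_inl.mpr hiS)) heq)
      · obtain ⟨l, hl⟩ : S.Nonempty := Finset.card_pos.mp (by omega)
        have hil : i ≠ l := fun hc => hiS (hc ▸ hl)
        have hT : (Finset.univ \ {l} : Finset (Fin (k+1))).card = k := by
          rw [Finset.card_sdiff_of_subset (Finset.singleton_subset_iff.mpr (Finset.mem_univ l))]
          simp
        have hSneT : S ≠ Finset.univ \ {l} := by
          intro hcon
          have : l ∉ S := by rw [hcon]; simp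
          exact this hl
        have hx1 : h (Sum.inl i) ∈ (exEdge k r S).image h := by
          rw [← heq]; exact hmemE S _ (mem_exEdge_inr.mpr ⟨rfl, hj⟩)
        have hx2 : h (Sum.inl i) ∈ (exEdge k r (Finset.univ \ {l})).image h :=
          hmemE _ _ (mem_exEdge_inl.mpr (by simp [hil]))
        have hx : h (Sum.inl i) ∈
            (exEdge k r S).image h ∩ (exEdge k r (Finset.univ \ {l})).image h :=
          Finset.mem_inter.mpr ⟨hx1, hx2⟩
        rw [hintcard S _ hS hT hSneT (hdist _ _ hS hT hSneT)] at hx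
        obtain ⟨m, hm, hmw⟩ := Finset.mem_image.mp hx
        have hmi : m = i := hwinj m i hmw
        rw [hmi] at hm
        exact hiS (Finset.mem_of_mem_inter_left hm)
    apply hfree
    refine ⟨(expansion r (completeHypergraph (k + 1) k)).image (fun e => e.image h), ?_, h, ?_, rfl⟩
    · intro x hx
      rw [expansion_complete_eq, Finset.image_image] at hx
      obtain ⟨S, hS, rfl⟩ := Finset.mem_image.mp hx
      exact hEH S (mem_completeHypergraph'.mp hS)
    · intro x hx y hy hxy
      rw [Finset.mem_coe, mem_verts_expansion] at hx hy
      obtain ⟨Sx, hSx, hxm⟩ := hx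
      obtain ⟨Sy, hSy, hym⟩ := hy
      rcases x with i | ⟨S, j⟩ <;> rcases y with i' | ⟨S', j'⟩
      · exact congrArg Sum.inl (hwinj i i' hxy)
      · obtain ⟨hS'eq, hj'⟩ := mem_exEdge_inr.mp hym
        exact absurd hxy.symm (hB S' j' i (hS'eq ▸ hSy) hj')
      · obtain ⟨hSeq, hj⟩ := mem_exEdge_inr.mp hxm
        exact absurd hxy (hB S j i' (hSeq ▸ hSx) hj)
      · obtain ⟨hSeq, hj⟩ := mem_exEdge_inr.mp hxm
        obtain ⟨hS'eq, hj'⟩ := mem_exEdge_inr.mp hym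
        have hScard : S.card = k := hSeq ▸ hSx
        have hS'card : S'.card = k := hS'eq ▸ hSy
        by_cases hSS : S = S'
        · subst hSS
          exact hinjEdge S hScard
            (Finset.mem_coe.mpr (mem_exEdge_inr.mpr ⟨rfl, hj⟩))
            (Finset.mem_coe.mpr (mem_exEdge_inr.mpr ⟨rfl, hj'⟩)) hxy
        · exfalso
          have hxE : h (Sum.inr (S, j)) ∈ (exEdge k r S).image h ∩ (exEdge k r S').image h := by
            refine Finset.mem_inter.mpr ⟨hmemE S _ (mem_exEdge_inr.mpr ⟨rfl, hj⟩), ?_⟩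
            rw [hxy]; exact hmemE S' _ (mem_exEdge_inr.mpr ⟨rfl, hj'⟩)
          rw [hintcard S S' hScard hS'card hSS (hdist S S' hScard hS'card hSS)] at hxE
          obtain ⟨m, hm, hmw⟩ := Finset.mem_image.mp hxE
          exact hB S j m hScard hj hmw.symm
  -- conclusion
  intro e1 he1 e2 he2
  obtain ⟨S, hS, rfl⟩ := hc_mem e1 he1
  obtain ⟨T, hT, rfl⟩ := hc_mem e2 he2
  rw [hEf, hEf]
  by_contra hne
  have hST : S ≠ T := fun hcon => hne (by rw [hcon])
  apply claim1
  intro S' T' hS' hT' hST' hEE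
  by_cases hcase : (exEdge k r S').image h = (exEdge k r S).image h
  · exact claim2 S' T' T hS' hT' hT hST' hEE (fun hcon => hne ((hcon.trans hcase).symm))
  · exact claim2 S' T' S hS' hT' hS hST' hEE (fun hcon => hcase hcon.symm)


end Paper
end

section
/- Let r ≥ k ≥ 3 be integers and set Δ = r−k. Then s(K_k^{k−1(+r)}) = Δ + k/(k−1). -/
open Finset Filter

namespace Paper

section Dev

variable (r k : ℕ)

/-- The expansion map for a single edge. -/
def F (e : Finset (Fin k)) : Finset (Fin k ⊕ Finset (Fin k) × ℕ) :=
  e.image Sum.inl ∪ (Finset.range (r - e.card)).image (fun i => Sum.inr (e, i))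

lemma expansion_eq : expansion r (completeHypergraph k (k-1))
    = (completeHypergraph k (k-1)).image (F r k) := rfl

variable {r k}

lemma mem_H_card {e : Finset (Fin k)} (he : e ∈ completeHypergraph k (k-1)) :
    e.card = k - 1 := (Finset.mem_powersetCard.mp he).2

lemma H_card (hk : 1 ≤ k) : (completeHypergraph k (k-1)).card = k := by
  rw [completeHypergraph, card_powersetCard, card_univ, Fintype.card_fin]
  have := Nat.choose_symm (n := k) (k := 1) hk
  simpa using this

lemma inl_mem_F {e : Finset (Fin k)} {x : Fin k} :
    Sum.inl x ∈ F r k e ↔ x ∈ e := by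
  simp [F]

lemma F_injOn : Set.InjOn (F r k) ↑(completeHypergraph k (k-1)) := by
  intro e _ e' _ h
  ext x
  rw [← inl_mem_F (r := r), h, inl_mem_F]

lemma card_F {e : Finset (Fin k)} (hk : 1 ≤ k) (hkr : k ≤ r)
    (he : e.card = k - 1) : (F r k e).card = r := by
  rw [F, card_union_of_disjoint, card_image_of_injective _ Sum.inl_injective,
    card_image_of_injective, card_range, he]
  · omega
  · intro a b hab; simpa using hab
  · simp [Finset.disjoint_left]

lemma sup_eq_univ {S : Finset (Finset (Fin k))} (hS : S ⊆ completeHypergraph k (k-1))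
    (h2 : 2 ≤ S.card) : S.sup id = (Finset.univ : Finset (Fin k)) := by
  obtain ⟨e, e', he, he', hne⟩ := Finset.one_lt_card_iff.mp h2
  apply Finset.eq_univ_of_forall
  intro v
  rw [Finset.mem_sup]
  by_contra hcon
  push_neg at hcon
  have hv : v ∉ e := hcon e he
  have hv' : v ∉ e' := hcon e' he'
  have h1 : e ⊆ Finset.univ.erase v := fun x hx => Finset.mem_erase.mpr ⟨fun h => hv (h ▸ hx), mem_univ x⟩
  have h1' : e' ⊆ Finset.univ.erase v := fun x hx => Finset.mem_erase.mpr ⟨fun h => hv' (h ▸ hx), mem_univ x⟩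
  have hcard : (Finset.univ.erase v).card = k - 1 := by
    rw [Finset.card_erase_of_mem (mem_univ v), card_univ, Fintype.card_fin]
  have he1 : e = Finset.univ.erase v :=
    Finset.eq_of_subset_of_card_le h1 (by rw [hcard, mem_H_card (hS he)])
  have he2 : e' = Finset.univ.erase v :=
    Finset.eq_of_subset_of_card_le h1' (by rw [hcard, mem_H_card (hS he')])
  exact hne (he1.trans he2.symm)

lemma verts_image_F {S : Finset (Finset (Fin k))} (hS : S ⊆ completeHypergraph k (k-1))
    (h2 : 2 ≤ S.card) :
    verts (S.image (F r k)) =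
      Finset.univ.image Sum.inl ∪
        S.biUnion (fun e => (Finset.range (r - e.card)).image (fun i => Sum.inr (e, i))) := by
  have hsup := sup_eq_univ hS h2
  ext x
  simp only [verts, Finset.sup_image, Function.comp, Finset.mem_sup, Finset.mem_union,
    Finset.mem_biUnion, id]
  constructor
  · rintro ⟨e, heS, hx⟩
    rcases Finset.mem_union.mp hx with h | h
    · left
      obtain ⟨y, hy, rfl⟩ := Finset.mem_image.mp h
      exact Finset.mem_image.mpr ⟨y, mem_univ y, rfl⟩
    · exact Or.inr ⟨e, heS, h⟩
  · rintro (h | ⟨e, heS, hx⟩)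
    · obtain ⟨y, _, rfl⟩ := Finset.mem_image.mp h
      have : y ∈ S.sup id := by rw [hsup]; exact mem_univ y
      obtain ⟨e, heS, hy⟩ := Finset.mem_sup.mp this
      exact ⟨e, heS, Finset.mem_union_left _ (Finset.mem_image_of_mem _ hy)⟩
    · exact ⟨e, heS, Finset.mem_union_right _ hx⟩

lemma card_verts {S : Finset (Finset (Fin k))} (hk : 1 ≤ k) (hkr : k ≤ r)
    (hS : S ⊆ completeHypergraph k (k-1)) (h2 : 2 ≤ S.card) :
    (verts (S.image (F r k))).card = k + S.card * (r - (k - 1)) := by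
  rw [verts_image_F hS h2, card_union_of_disjoint, card_image_of_injective _ Sum.inl_injective,
    card_univ, Fintype.card_fin, Finset.card_biUnion]
  · have hc : ∀ e ∈ S, ((Finset.range (r - e.card)).image
        (fun i => (Sum.inr (e, i) : Fin k ⊕ Finset (Fin k) × ℕ))).card = r - (k - 1) := by
      intro e he
      rw [card_image_of_injective _ (fun a b hab => by simpa using hab), card_range,
        mem_H_card (hS he)]
    rw [Finset.sum_congr rfl hc, Finset.sum_const, smul_eq_mul]
  · intro e he e' he' hne
    simp only [Finset.disjoint_left, Finset.mem_image, Finset.mem_range]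
    rintro x ⟨i, _, rfl⟩ ⟨j, _, h⟩
    have := (Prod.ext_iff.mp (Sum.inr.inj h)).1
    exact hne this.symm
  · simp only [Finset.disjoint_left, Finset.mem_biUnion]
    rintro x hx ⟨e, _, h⟩
    obtain ⟨y, _, rfl⟩ := Finset.mem_image.mp hx
    simp at h

end Dev

section Main

variable {r k : ℕ}

lemma ratio_bound {t : ℝ} (hk3 : 3 ≤ k) (hkr : k ≤ r) (ht2 : 2 ≤ t) (htk : t ≤ k) :
    (t - 1) / ((t - 1) * ((r:ℝ) - k + 1) + 1) ≤
      ((k:ℝ) - 1) / (((k:ℝ) - 1) * ((r:ℝ) - k + 1) + 1) := by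
  have hR : (0:ℝ) ≤ (r:ℝ) - k := by
    have : (k:ℝ) ≤ r := by exact_mod_cast hkr
    linarith
  have hd1 : (0:ℝ) < (t - 1) * ((r:ℝ) - k + 1) + 1 := by nlinarith
  have hd2 : (0:ℝ) < ((k:ℝ) - 1) * ((r:ℝ) - k + 1) + 1 := by
    have : (3:ℝ) ≤ k := by exact_mod_cast hk3
    nlinarith
  rw [div_le_div_iff₀ hd1 hd2]
  nlinarith

lemma mDensity_value (hk : 3 ≤ k) (hkr : k ≤ r) :
    mDensity r (expansion r (completeHypergraph k (k-1))) =
      ((k:ℝ) - 1) / (((k:ℝ) - 1) * ((r:ℝ) - k + 1) + 1) := by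
  have hk1 : 1 ≤ k := by omega
  have hkR : (k:ℝ) ≤ r := by exact_mod_cast hkr
  have hk3R : (3:ℝ) ≤ k := by exact_mod_cast hk
  set H := completeHypergraph k (k-1) with hH
  set E := expansion r H with hE
  have hEimg : E = H.image (F r k) := rfl
  have hEcard : E.card = k := by
    rw [hEimg, card_image_of_injOn F_injOn, H_card hk1]
  -- the key: for any G in the index set, the value equals (t-1)/((t-1)(r-k+1)+1)
  have key : ∀ G : Finset (Finset (Fin k ⊕ Finset (Fin k) × ℕ)), G ⊆ E → 2 ≤ G.card →
      ((G.card : ℝ) - 1) / (((verts G).card : ℝ) - r) =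
        ((G.card : ℝ) - 1) / (((G.card : ℝ) - 1) * ((r:ℝ) - k + 1) + 1) ∧ G.card ≤ k := by
    intro G hG h2
    obtain ⟨S, hSH, hSG⟩ := Finset.subset_image_iff.mp (hEimg ▸ hG)
    have hScard : S.card = G.card := by
      rw [← hSG, card_image_of_injOn (F_injOn.mono (by exact_mod_cast hSH))]
    have hvc : (verts G).card = k + S.card * (r - (k-1)) := by
      rw [← hSG]; exact card_verts hk1 hkr hSH (hScard ▸ h2)
    have htk : G.card ≤ k := by
      rw [← hScard]
      calc S.card ≤ H.card := card_le_card hSH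
        _ = k := H_card hk1
    refine ⟨?_, htk⟩
    have hsub : k - 1 ≤ r := by omega
    have hden : (((verts G).card : ℝ) - r) =
        ((G.card : ℝ) - 1) * ((r:ℝ) - k + 1) + 1 := by
      rw [hvc, ← hScard]
      push_cast [Nat.cast_sub hsub, Nat.cast_sub hk1]
      ring
    rw [hden]
  apply IsGreatest.csSup_eq
  constructor
  · exact ⟨E, Finset.Subset.refl E, by omega, by
      rw [(key E (Finset.Subset.refl E) (by omega)).1, hEcard]⟩
  · rintro x ⟨G, hG, h2, rfl⟩
    obtain ⟨hval, htk⟩ := key G hG h2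
    rw [hval]
    exact ratio_bound hk hkr (by exact_mod_cast h2) (by exact_mod_cast htk)



theorem statement_17 (r k : ℕ) (hk : 3 ≤ k) (hkr : k ≤ r) :
    sDensity r (expansion r (completeHypergraph k (k - 1))) =
      ((r : ℝ) - k) + (k : ℝ) / ((k : ℝ) - 1) := by
  rw [sDensity, mDensity_value hk hkr]
  have hk3R : (3:ℝ) ≤ k := by exact_mod_cast hk
  have hkR : (k:ℝ) ≤ r := by exact_mod_cast hkr
  have h1 : ((k:ℝ) - 1) ≠ 0 := by linarith
  have h2 : ((k:ℝ) - 1) * ((r:ℝ) - k + 1) + 1 ≠ 0 := by nlinarith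
  rw [one_div_div]
  field_simp
  ring


end Main

end Paper
end

section
/- For every integer k ≥ 3, the k-expansion K_k^{k−1(+k)} of the complete (k−1)-graph on k vertices is isomorphic to a spanning subgraph of some tight k-tree. -/
open Finset Filter

namespace Paper

/-- The "base" edge: all of `Fin k`, embedded. -/
def baseEdge (k : ℕ) : Finset (Fin k ⊕ Finset (Fin k) × ℕ) :=
  (Finset.univ : Finset (Fin k)).image Sum.inl

/-- The expanded edge corresponding to the `(k-1)`-set avoiding `a`. -/
def expEdge (k : ℕ) (a : Fin k) : Finset (Fin k ⊕ Finset (Fin k) × ℕ) :=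
  ((Finset.univ : Finset (Fin k)).erase a).image Sum.inl ∪
    {Sum.inr ((Finset.univ : Finset (Fin k)).erase a, 0)}

lemma erase_univ_inj (k : ℕ) : Function.Injective
    (fun a : Fin k => (Finset.univ : Finset (Fin k)).erase a) := by
  intro a b h
  have h' : (Finset.univ : Finset (Fin k)).erase a = Finset.univ.erase b := h
  by_contra hne
  have : a ∈ (Finset.univ : Finset (Fin k)).erase b := by
    simp [hne]
  rw [← h'] at this
  simp at this

lemma expEdge_inj (k : ℕ) : Function.Injective (expEdge k) := by
  intro a b h
  have hv : Sum.inr ((Finset.univ : Finset (Fin k)).erase a, 0) ∈ expEdge k b := by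
    rw [← h]; simp [expEdge]
  simp only [expEdge, Finset.mem_union, Finset.mem_image, Finset.mem_singleton] at hv
  rcases hv with ⟨x, _, hx⟩ | hv
  · exact absurd hx (by simp)
  · have h2 := Sum.inr_injective hv
    exact erase_univ_inj k (congrArg Prod.fst h2)

lemma powersetCard_pred (k : ℕ) (hk : 1 ≤ k) :
    Finset.powersetCard (k - 1) (Finset.univ : Finset (Fin k)) =
      Finset.univ.image (fun a : Fin k => (Finset.univ : Finset (Fin k)).erase a) := by
  ext s
  simp only [Finset.mem_powersetCard_univ, Finset.mem_image, Finset.mem_univ, true_and]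
  constructor
  · intro hs
    have hcompl : sᶜ.card = 1 := by
      rw [Finset.card_compl, hs]
      simp [Nat.sub_sub_self hk]
    obtain ⟨a, ha⟩ := Finset.card_eq_one.mp hcompl
    refine ⟨a, ?_⟩
    rw [← Finset.compl_singleton, ← ha, compl_compl]
  · rintro ⟨a, rfl⟩
    simp [Finset.card_erase_of_mem]

lemma expansion_eq_s18 (k : ℕ) (hk : 1 ≤ k) :
    expansion k (completeHypergraph k (k - 1)) =
      Finset.univ.image (expEdge k) := by
  rw [expansion, completeHypergraph, powersetCard_pred k hk, Finset.image_image]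
  refine Finset.image_congr ?_
  intro a _
  have hcard : ((Finset.univ : Finset (Fin k)).erase a).card = k - 1 := by
    simp [Finset.card_erase_of_mem]
  simp only [Function.comp_apply, hcard, Nat.sub_sub_self hk]
  rfl

theorem statement_18 (k : ℕ) (hk : 3 ≤ k) :
    ∃ T S : Finset (Finset (Fin k ⊕ Finset (Fin k) × ℕ)),
      IsTightTree k T ∧ S ⊆ T ∧ verts S = verts T ∧
      IsCopyOf S (expansion k (completeHypergraph k (k - 1))) := by
  classical
  have hk1 : 1 ≤ k := by omega
  set S : Finset (Finset (Fin k ⊕ Finset (Fin k) × ℕ)) :=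
    Finset.univ.image (expEdge k) with hS
  set T : Finset (Finset (Fin k ⊕ Finset (Fin k) × ℕ)) := insert (baseEdge k) S with hT
  have hbase_notin : ∀ a : Fin k,
      Sum.inr ((Finset.univ : Finset (Fin k)).erase a, 0) ∉ baseEdge k := by
    intro a h
    simp [baseEdge] at h
  have hmem_inr : ∀ a b : Fin k,
      Sum.inr ((Finset.univ : Finset (Fin k)).erase a, 0) ∈ expEdge k b → a = b := by
    intro a b h
    simp only [expEdge, Finset.mem_union, Finset.mem_image, Finset.mem_singleton] at h
    rcases h with ⟨x, _, hx⟩ | h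
    · exact absurd hx (by simp)
    · exact erase_univ_inj k (by simpa using (Sum.inr_injective h))
  -- the enumeration of edges of T
  set E : Fin (k + 1) → Finset (Fin k ⊕ Finset (Fin k) × ℕ) :=
    fun i => Fin.cases (baseEdge k) (fun a => expEdge k a) i with hE
  have hE0 : E 0 = baseEdge k := rfl
  have hEsucc : ∀ a : Fin k, E a.succ = expEdge k a := fun a => rfl
  have hEinj : Function.Injective E := by
    intro i j h
    induction i using Fin.cases with
    | zero =>
      induction j using Fin.cases with
      | zero => rfl
      | succ b =>
        exfalso
        rw [hE0, hEsucc] at h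
        exact hbase_notin b (h ▸ (by simp [expEdge]))
    | succ a =>
      induction j using Fin.cases with
      | zero =>
        exfalso
        rw [hE0, hEsucc] at h
        exact hbase_notin a (h ▸ (by simp [expEdge]))
      | succ b =>
        rw [hEsucc, hEsucc] at h
        exact congrArg Fin.succ (expEdge_inj k h)
  have hTE : T = Finset.image E Finset.univ := by
    ext x
    simp only [hT, Finset.mem_insert, hS, Finset.mem_image, Finset.mem_univ, true_and]
    constructor
    · rintro (rfl | ⟨a, rfl⟩)
      · exact ⟨0, rfl⟩
      · exact ⟨a.succ, rfl⟩
    · rintro ⟨i, rfl⟩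
      induction i using Fin.cases with
      | zero => exact Or.inl rfl
      | succ a => exact Or.inr ⟨a, rfl⟩
  have huniform : IsUniform T k := by
    intro e he
    rw [hT, Finset.mem_insert] at he
    rcases he with rfl | he
    · simp [baseEdge, Finset.card_image_of_injective _ Sum.inl_injective]
    · rw [hS, Finset.mem_image] at he
      obtain ⟨a, _, rfl⟩ := he
      rw [expEdge, Finset.card_union_of_disjoint (by simp)]
      rw [Finset.card_image_of_injective _ Sum.inl_injective]
      simp [Finset.card_erase_of_mem]
      omega
  have htight : IsTightTree k T := by
    refine ⟨huniform, k + 1, E, hEinj, hTE, ?_⟩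
    intro i hi
    induction i using Fin.cases with
    | zero => simp at hi
    | succ a =>
      refine ⟨Sum.inr ((Finset.univ : Finset (Fin k)).erase a, 0), by simp [hEsucc, expEdge],
        0, by simp [Fin.succ_pos], ?_, ?_⟩
      · intro j hj hmem
        induction j using Fin.cases with
        | zero => exact hbase_notin a (hE0 ▸ hmem)
        | succ b =>
          rw [hEsucc] at hmem
          have := hmem_inr a b hmem
          subst this
          omega
      · intro x hx
        rw [hEsucc, Finset.mem_sdiff, Finset.mem_singleton] at hx
        obtain ⟨hx1, hx2⟩ := hx
        simp only [expEdge, Finset.mem_union, Finset.mem_image, Finset.mem_singleton] at hx1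
        rcases hx1 with ⟨y, _, rfl⟩ | h
        · simp [hE0, baseEdge]
        · exact absurd h hx2
  have hST : S ⊆ T := Finset.subset_insert _ _
  have hbase_sub : baseEdge k ⊆ verts S := by
    intro x hx
    simp only [baseEdge, Finset.mem_image, Finset.mem_univ, true_and] at hx
    obtain ⟨c, rfl⟩ := hx
    obtain ⟨a, ha⟩ := Fintype.exists_ne_of_one_lt_card (by rw [Fintype.card_fin]; omega) c
    have hmem : expEdge k a ∈ S := by
      rw [hS]; exact Finset.mem_image_of_mem _ (Finset.mem_univ a)
    have : Sum.inl c ∈ expEdge k a := by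
      simp only [expEdge, Finset.mem_union, Finset.mem_image]
      exact Or.inl ⟨c, by simp [Ne.symm ha], rfl⟩
    exact Finset.mem_sup.mpr ⟨expEdge k a, hmem, this⟩
  have hverts : verts S = verts T := by
    simp only [verts, hT, Finset.sup_insert, id_eq, Finset.sup_eq_union]
    exact (Finset.union_eq_right.mpr hbase_sub).symm
  refine ⟨T, S, htight, hST, hverts, ?_⟩
  refine ⟨id, fun x _ y _ h => h, ?_⟩
  rw [expansion_eq_s18 k hk1, ← hS]
  simp

end Paper
end

section
/- Let r ≥ k ≥ 2 be integers, let T be a tight k-tree, and let S be a spanning subgraph of T. Then the r-expansion S^{(+r)} is isomorphic to a spanning subgraph of some tight r-tree. -/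
open Finset Filter

namespace Paper

section Aux
variable {α : Type*} [DecidableEq α]

/-- A list of edges forming a tight tree in order. -/
def Good (r : ℕ) (L : List (Finset α)) : Prop :=
  (∀ g ∈ L, g.card = r) ∧
  ∀ p : ℕ, ∀ hp : p < L.length, 0 < p →
    ∃ v ∈ L[p], (∀ q : ℕ, ∀ hq : q < L.length, q < p → v ∉ L[q]) ∧
      ∃ s : ℕ, ∃ hs : s < L.length, s < p ∧ L[p] \ {v} ⊆ L[s]

lemma good_nil (r : ℕ) : Good r ([] : List (Finset α)) :=
  ⟨by simp, by simp⟩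

lemma good_snoc {r : ℕ} {L : List (Finset α)} {g : Finset α} (hL : Good r L)
    (hcard : g.card = r)
    (hprev : L ≠ [] → ∃ v ∈ g, (∀ h ∈ L, v ∉ h) ∧ ∃ h ∈ L, g \ {v} ⊆ h) :
    Good r (L ++ [g]) := by
  constructor
  · intro g' hg'
    rcases List.mem_append.mp hg' with h | h
    · exact hL.1 g' h
    · simp only [List.mem_singleton] at h; subst h; exact hcard
  · intro p hp hp0
    have hlen : (L ++ [g]).length = L.length + 1 := by simp
    rw [hlen] at hp
    rcases lt_or_eq_of_le (Nat.lt_succ_iff.mp hp) with hp2 | hp2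
    · obtain ⟨v, hv, hfresh, s, hs, hslt, hsub⟩ := hL.2 p hp2 hp0
      refine ⟨v, by rwa [List.getElem_append_left hp2], ?_, s, by simp; omega, hslt, ?_⟩
      · intro q hq hqp
        have hq2 : q < L.length := by omega
        rw [List.getElem_append_left hq2]; exact hfresh q hq2 hqp
      · rw [List.getElem_append_left hp2, List.getElem_append_left (show s < L.length by omega)]
        exact hsub
    · -- p = L.length
      have hLne : L ≠ [] := by
        intro h; subst h; simp at hp2; omega
      obtain ⟨v, hv, hfresh, h, hh, hsub⟩ := hprev hLne
      have hpg : (L ++ [g])[p]'(by simp; omega) = g := by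
        subst hp2; simp
      refine ⟨v, by rw [hpg]; exact hv, ?_, ?_⟩
      · intro q hq hqp
        have hq2 : q < L.length := by omega
        rw [List.getElem_append_left hq2]
        exact hfresh _ (List.getElem_mem hq2)
      · obtain ⟨s, hs, hsL⟩ := List.mem_iff_getElem.mp hh
        refine ⟨s, by simp; omega, by omega, ?_⟩
        rw [hpg, List.getElem_append_left hs, hsL]
        exact hsub

lemma good_isTightTree {r : ℕ} {L : List (Finset α)} (h : Good r L) :
    IsTightTree r L.toFinset := by
  refine ⟨fun g hg => h.1 g (List.mem_toFinset.mp hg),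
    L.length, fun i => L[i], ?_, ?_, ?_⟩
  · intro i j hij
    simp only at hij
    by_contra hne
    rcases lt_trichotomy (i : ℕ) (j : ℕ) with hlt | heq | hlt
    · obtain ⟨v, hv, hfresh, _⟩ := h.2 j j.2 (by omega)
      exact hfresh i i.2 hlt (hij ▸ hv)
    · exact hne (Fin.ext heq)
    · obtain ⟨v, hv, hfresh, _⟩ := h.2 i i.2 (by omega)
      exact hfresh j j.2 hlt (hij ▸ hv)
  · ext x
    simp only [List.mem_toFinset, Finset.mem_image, Finset.mem_univ, true_and]
    rw [List.mem_iff_getElem]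
    constructor
    · rintro ⟨n, hn, rfl⟩; exact ⟨⟨n, hn⟩, rfl⟩
    · rintro ⟨i, rfl⟩; exact ⟨i, i.2, rfl⟩
  · intro i hi
    obtain ⟨v, hv, hfresh, s, hs, hslt, hsub⟩ := h.2 i i.2 hi
    exact ⟨v, hv, ⟨s, hs⟩, hslt, fun j hj => hfresh j j.2 hj, hsub⟩

end Aux

section Aux2
variable {V : Type} [DecidableEq V]

lemma card_inl_pad (a b : Finset V) (n : ℕ) :
    ((a.image Sum.inl ∪ (Finset.range n).image fun m => (Sum.inr (b, m) : V ⊕ Finset V × ℕ)) :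
      Finset (V ⊕ Finset V × ℕ)).card = a.card + n := by
  rw [Finset.card_union_of_disjoint]
  · rw [Finset.card_image_of_injective _ Sum.inl_injective,
      Finset.card_image_of_injective, Finset.card_range]
    intro x y hxy
    simpa using hxy
  · simp only [Finset.disjoint_left, Finset.mem_image]
    rintro x ⟨u, hu, rfl⟩ ⟨m, hm, h⟩
    exact absurd h (by simp)

lemma inl_mem_inl_pad {a b : Finset V} {n : ℕ} {x : V} :
    (Sum.inl x : V ⊕ Finset V × ℕ) ∈
      (a.image Sum.inl ∪ (Finset.range n).image fun m => (Sum.inr (b, m) : V ⊕ Finset V × ℕ))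
    ↔ x ∈ a := by
  simp

lemma inr_mem_inl_pad {a b : Finset V} {n : ℕ} {p : Finset V × ℕ} :
    (Sum.inr p : V ⊕ Finset V × ℕ) ∈
      (a.image Sum.inl ∪ (Finset.range n).image fun m => (Sum.inr (b, m) : V ⊕ Finset V × ℕ))
    ↔ p.1 = b ∧ p.2 < n := by
  cases p with
  | mk c m =>
    simp only [Finset.mem_union, Finset.mem_image, Finset.mem_range]
    constructor
    · rintro (⟨u, _, h⟩ | ⟨m', hm', h⟩)
      · exact absurd h (by simp)
      · rw [Sum.inr.injEq, Prod.mk.injEq] at h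
        obtain ⟨h1, h2⟩ := h
        exact ⟨h1.symm, h2 ▸ hm'⟩
    · rintro ⟨h1, h2⟩
      exact Or.inr ⟨m, h2, by rw [h1]⟩

end Aux2

section Build
variable {V : Type} [DecidableEq V]

lemma main_build {r k : ℕ} (hk : 1 ≤ k) (hkr : k ≤ r)
    {t : ℕ} (e : Fin t → Finset V) (einj : Function.Injective e)
    (hcard : ∀ i, (e i).card = k)
    (htree : ∀ i : Fin t, 0 < (i : ℕ) →
      ∃ v ∈ e i, ∃ s : Fin t, (s : ℕ) < (i : ℕ) ∧
        (∀ j : Fin t, (j : ℕ) < (i : ℕ) → v ∉ e j) ∧ e i \ {v} ⊆ e s)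
    (S : Finset (Finset V))
    (j0 : Fin t) (hj0S : e j0 ∈ S) (hj0min : ∀ j : Fin t, e j ∈ S → (j0:ℕ) ≤ (j:ℕ)) :
    ∀ i : ℕ, 1 ≤ i → i ≤ t → ∃ L : List (Finset (V ⊕ Finset V × ℕ)),
      Good r L ∧
      (∀ j : Fin t, (j:ℕ) < i → ∃ g ∈ L, (e j).image Sum.inl ⊆ g) ∧
      (∀ j : Fin t, (j:ℕ) < i → e j ∈ S →
        ((e j).image Sum.inl ∪ (Finset.range (r - k)).image (fun m => Sum.inr (e j, m))) ∈ L) ∧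
      (∀ g ∈ L, ∀ v : V, Sum.inl v ∈ g → ∃ j : Fin t, (j:ℕ) < i ∧ v ∈ e j) ∧
      (∀ g ∈ L, ∀ a : Finset V, ∀ m : ℕ, Sum.inr (a, m) ∈ g →
        m < r - k ∧ (a = e j0 ∨ ∃ j : Fin t, (j:ℕ) < i ∧ e j ∈ S ∧ a = e j)) ∧
      (∀ j : Fin t, (j:ℕ) < i → (j:ℕ) ≤ (j0:ℕ) →
        ((e j).image Sum.inl ∪ (Finset.range (r - k)).image (fun m => Sum.inr (e j0, m))) ∈ L) := by
  intro i hi1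
  induction i, hi1 using Nat.le_induction with
  | base =>
    intro h1t
    have h0t : 0 < t := h1t
    set jz : Fin t := ⟨0, h0t⟩ with hjz
    set P : Finset (V ⊕ Finset V × ℕ) :=
      (Finset.range (r - k)).image (fun m => Sum.inr (e j0, m)) with hP
    set g0 : Finset (V ⊕ Finset V × ℕ) := (e jz).image Sum.inl ∪ P with hg0
    have hg0card : g0.card = r := by
      rw [hg0, hP, card_inl_pad, hcard]; omega
    refine ⟨[g0], good_snoc (good_nil r) hg0card (by simp), ?_, ?_, ?_, ?_, ?_⟩
    · intro j hj
      have : j = jz := Fin.ext (by simp only [hjz]; omega)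
      exact ⟨g0, by simp, this ▸ Finset.subset_union_left⟩
    · intro j hj hjS
      have hjjz : j = jz := Fin.ext (by simp only [hjz]; omega)
      have : j0 = j := Fin.ext (by have := hj0min j hjS; simp only [hjjz, hjz] at *; omega)
      rw [hjjz] at hjS ⊢
      simp only [List.mem_singleton, hg0, hP]
      rw [show e j0 = e jz from by rw [this, hjjz]]
    · intro g hg v hv
      simp only [List.mem_singleton] at hg
      subst hg
      rw [hg0, hP] at hv
      exact ⟨jz, by simp [hjz], inl_mem_inl_pad.mp hv⟩
    · intro g hg a m hm
      simp only [List.mem_singleton] at hg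
      subst hg
      rw [hg0, hP] at hm
      have := inr_mem_inl_pad.mp hm
      exact ⟨this.2, Or.inl this.1⟩
    · intro j hj _
      have : j = jz := Fin.ext (by simp only [hjz]; omega)
      simp [this, hg0, hP]
  | succ i hi1 IH =>
    intro hit
    obtain ⟨L, hGood, hA, hB, hC, hD, hE⟩ := IH (by omega)
    set ii : Fin t := ⟨i, by omega⟩ with hii
    obtain ⟨v, hv, s, hslt, hfreshT, hsubT⟩ := htree ii (by simp only [hii]; omega)
    rw [show (↑ii : ℕ) = i from rfl] at hslt hfreshT
    have hvfresh : ∀ g ∈ L, (Sum.inl v : V ⊕ Finset V × ℕ) ∉ g := by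
      intro g hg hmem
      obtain ⟨j, hj, hjv⟩ := hC g hg v hmem
      exact hfreshT j (by omega) hjv
    have heii : ∀ j : Fin t, (j:ℕ) < i → e j ≠ e ii := by
      intro j hj hej
      have h2 := congrArg Fin.val (einj hej)
      simp only [hii] at h2
      omega
    set P : Finset (V ⊕ Finset V × ℕ) :=
      (Finset.range (r - k)).image (fun m => Sum.inr (e j0, m)) with hP
    by_cases hij0 : i ≤ (j0 : ℕ)
    · -- still in the initial segment: edges of the form inl(e j) ∪ P
      have hfs := hE s (by omega) (by omega)
      set fs : Finset (V ⊕ Finset V × ℕ) := (e s).image Sum.inl ∪ P with hfs_def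
      set g0 : Finset (V ⊕ Finset V × ℕ) := (e ii).image Sum.inl ∪ P with hg0
      have hg0card : g0.card = r := by rw [hg0, hP, card_inl_pad, hcard]; omega
      have hGood' : Good r (L ++ [g0]) := by
        refine good_snoc hGood hg0card (fun _ => ⟨Sum.inl v, ?_, hvfresh, fs, hfs, ?_⟩)
        · rw [hg0]; exact Finset.mem_union_left _ (Finset.mem_image_of_mem _ hv)
        · intro x hx
          rw [Finset.mem_sdiff] at hx
          obtain ⟨hx1, hx2⟩ := hx
          rw [hg0, Finset.mem_union] at hx1
          rw [hfs_def, Finset.mem_union]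
          rcases hx1 with hx1 | hx1
          · left
            obtain ⟨u, hu, rfl⟩ := Finset.mem_image.mp hx1
            have huv : u ≠ v := fun h => hx2 (by simp [h])
            exact Finset.mem_image_of_mem _
              (hsubT (Finset.mem_sdiff.mpr ⟨hu, by simp [huv]⟩))
          · right; exact hx1
      refine ⟨L ++ [g0], hGood', ?_, ?_, ?_, ?_, ?_⟩
      · intro j hj
        rcases Nat.lt_succ_iff_lt_or_eq.mp hj with hj | hj
        · obtain ⟨g, hg, hsub⟩ := hA j hj
          exact ⟨g, List.mem_append_left _ hg, hsub⟩
        · refine ⟨g0, List.mem_append_right _ (by simp), ?_⟩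
          rw [show j = ii from Fin.ext hj, hg0]
          exact Finset.subset_union_left
      · intro j hj hjS
        rcases Nat.lt_succ_iff_lt_or_eq.mp hj with hj | hj
        · exact List.mem_append_left _ (hB j hj hjS)
        · have h1 : j = ii := Fin.ext hj
          have h2 : j0 = j := Fin.ext (by have := hj0min j hjS; omega)
          apply List.mem_append_right
          simp only [List.mem_singleton]
          rw [h1, hg0, hP, show e j0 = e ii from by rw [h2, h1]]
      · intro g hg x hx
        rcases List.mem_append.mp hg with hg | hg
        · obtain ⟨j, hj, h⟩ := hC g hg x hx
          exact ⟨j, by omega, h⟩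
        · simp only [List.mem_singleton] at hg
          subst hg
          rw [hg0, hP] at hx
          exact ⟨ii, Nat.lt_succ_self i, inl_mem_inl_pad.mp hx⟩
      · intro g hg a m hm
        rcases List.mem_append.mp hg with hg | hg
        · obtain ⟨h1, h2⟩ := hD g hg a m hm
          refine ⟨h1, h2.imp id ?_⟩
          rintro ⟨j, hj, hjS, rfl⟩
          exact ⟨j, by omega, hjS, rfl⟩
        · simp only [List.mem_singleton] at hg
          subst hg
          rw [hg0, hP] at hm
          have := inr_mem_inl_pad.mp hm
          exact ⟨this.2, Or.inl this.1⟩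
      · intro j hj hjle
        rcases Nat.lt_succ_iff_lt_or_eq.mp hj with hj | hj
        · exact List.mem_append_left _ (hE j hj hjle)
        · apply List.mem_append_right
          simp only [List.mem_singleton]
          rw [show j = ii from Fin.ext hj, hg0, hP]
    · -- past j0
      push_neg at hij0
      obtain ⟨fs, hfsL, hfs_sub⟩ := hA s (by omega)
      have hLne : L ≠ [] := by
        intro h; rw [h] at hfsL; simp at hfsL
      have hfscard : fs.card = r := hGood.1 fs hfsL
      have hcard1 : (((e ii \ {v}).image Sum.inl : Finset (V ⊕ Finset V × ℕ))).card = k - 1 := by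
        rw [Finset.card_image_of_injective _ Sum.inl_injective,
          Finset.card_sdiff_of_subset (Finset.singleton_subset_iff.mpr hv), hcard]
        simp
      obtain ⟨w, hwfs, hwnot⟩ : ∃ w ∈ fs, w ∉ (e ii \ {v}).image Sum.inl := by
        by_contra h
        push_neg at h
        have := Finset.card_le_card h
        omega
      set g0 : Finset (V ⊕ Finset V × ℕ) := insert (Sum.inl v) (fs.erase w) with hg0
      have hvnotfs : (Sum.inl v : V ⊕ Finset V × ℕ) ∉ fs := hvfresh fs hfsL
      have hg0card : g0.card = r := by
        rw [hg0, Finset.card_insert_of_notMem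
          (fun h => hvnotfs (Finset.mem_of_mem_erase h)),
          Finset.card_erase_of_mem hwfs, hfscard]
        omega
      have hg0sub : (e ii).image Sum.inl ⊆ g0 := by
        intro x hx
        obtain ⟨u, hu, rfl⟩ := Finset.mem_image.mp hx
        by_cases huv : u = v
        · subst huv; exact Finset.mem_insert_self _ _
        · apply Finset.mem_insert_of_mem
          apply Finset.mem_erase.mpr
          have hmem : (Sum.inl u : V ⊕ Finset V × ℕ) ∈ (e ii \ {v}).image Sum.inl :=
            Finset.mem_image_of_mem _ (Finset.mem_sdiff.mpr ⟨hu, by simp [huv]⟩)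
          exact ⟨fun h => hwnot (h ▸ hmem),
            hfs_sub (Finset.mem_image_of_mem _
              (hsubT (Finset.mem_sdiff.mpr ⟨hu, by simp [huv]⟩)))⟩
      have hg0diff : g0 \ {Sum.inl v} ⊆ fs := by
        intro x hx
        rw [Finset.mem_sdiff] at hx
        obtain ⟨hx1, hx2⟩ := hx
        rw [hg0, Finset.mem_insert] at hx1
        rcases hx1 with hx1 | hx1
        · exact absurd (Finset.mem_singleton.mpr hx1) hx2
        · exact Finset.mem_of_mem_erase hx1
      have hGood1 : Good r (L ++ [g0]) :=
        good_snoc hGood hg0card (fun _ =>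
          ⟨Sum.inl v, Finset.mem_insert_self _ _, hvfresh, fs, hfsL, hg0diff⟩)
      have hg0mem : g0 ∈ L ++ [g0] := List.mem_append_right _ (by simp)
      have hC1 : ∀ g ∈ L ++ [g0], ∀ x : V, Sum.inl x ∈ g →
          ∃ j : Fin t, (j:ℕ) < i + 1 ∧ x ∈ e j := by
        intro g hg x hx
        rcases List.mem_append.mp hg with hg | hg
        · obtain ⟨j, hj, h⟩ := hC g hg x hx
          exact ⟨j, by omega, h⟩
        · simp only [List.mem_singleton] at hg
          subst hg
          rw [hg0, Finset.mem_insert] at hx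
          rcases hx with hx | hx
          · exact ⟨ii, Nat.lt_succ_self i, (Sum.inl.inj hx) ▸ hv⟩
          · obtain ⟨j, hj, h⟩ := hC fs hfsL x (Finset.mem_of_mem_erase hx)
            exact ⟨j, by omega, h⟩
      have hD1 : ∀ g ∈ L ++ [g0], ∀ a : Finset V, ∀ m : ℕ, Sum.inr (a, m) ∈ g →
          m < r - k ∧ (a = e j0 ∨ ∃ j : Fin t, (j:ℕ) < i ∧ e j ∈ S ∧ a = e j) := by
        intro g hg a m hm
        rcases List.mem_append.mp hg with hg | hg
        · exact hD g hg a m hm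
        · simp only [List.mem_singleton] at hg
          subst hg
          rw [hg0, Finset.mem_insert] at hm
          rcases hm with hm | hm
          · exact absurd hm (by simp)
          · exact hD fs hfsL a m (Finset.mem_of_mem_erase hm)
      by_cases hiiS : e ii ∈ S
      · -- need the expansion chain
        have key : ∀ m : ℕ, m ≤ r - k → ∃ L' : List (Finset (V ⊕ Finset V × ℕ)),
            Good r L' ∧ (∀ g ∈ L ++ [g0], g ∈ L') ∧
            (∀ g ∈ L', ∀ x : V, Sum.inl x ∈ g → ∃ j : Fin t, (j:ℕ) < i + 1 ∧ x ∈ e j) ∧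
            (∀ g ∈ L', ∀ a : Finset V, ∀ m' : ℕ, Sum.inr (a, m') ∈ g →
              m' < r - k ∧ (a = e j0 ∨ (∃ j : Fin t, (j:ℕ) < i ∧ e j ∈ S ∧ a = e j) ∨
                (a = e ii ∧ m' < m))) ∧
            ∃ h ∈ L', ((e ii).image Sum.inl ∪
              (Finset.range m).image (fun m' => Sum.inr (e ii, m'))) ⊆ h := by
          intro m
          induction m with
          | zero =>
            intro _
            refine ⟨L ++ [g0], hGood1, fun g hg => hg, hC1, ?_, g0, hg0mem, ?_⟩
            · intro g hg a m' hm'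
              obtain ⟨h1, h2⟩ := hD1 g hg a m' hm'
              exact ⟨h1, h2.imp id Or.inl⟩
            · simpa using hg0sub
          | succ m IHm =>
            intro hm
            obtain ⟨L', hGood', hmem', hC', hD', h, hhL', hhsub⟩ := IHm (by omega)
            have hL'ne : L' ≠ [] := by
              intro hc; rw [hc] at hhL'; simp at hhL'
            have hhcard : h.card = r := hGood'.1 h hhL'
            have hcoreCard : (((e ii).image Sum.inl ∪
                (Finset.range m).image (fun m' => Sum.inr (e ii, m'))) :
                Finset (V ⊕ Finset V × ℕ)).card = k + m := by
              rw [card_inl_pad, hcard]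
            obtain ⟨u, hu, hunot⟩ : ∃ u ∈ h, u ∉ ((e ii).image Sum.inl ∪
                (Finset.range m).image (fun m' => Sum.inr (e ii, m'))) := by
              by_contra hc
              push_neg at hc
              have := Finset.card_le_card hc
              omega
            have hxfresh : ∀ g ∈ L', (Sum.inr (e ii, m) : V ⊕ Finset V × ℕ) ∉ g := by
              intro g hg hmem
              obtain ⟨h1, h2⟩ := hD' g hg (e ii) m hmem
              rcases h2 with h2 | ⟨j, hj, _, h2⟩ | ⟨_, h2⟩
              · exact absurd (congrArg Fin.val (einj h2.symm)) (by simp [hii]; omega)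
              · exact heii j hj h2.symm
              · omega
            set h' : Finset (V ⊕ Finset V × ℕ) :=
              insert (Sum.inr (e ii, m)) (h.erase u) with hh'
            have hxh : (Sum.inr (e ii, m) : V ⊕ Finset V × ℕ) ∉ h := hxfresh h hhL'
            have hh'card : h'.card = r := by
              rw [hh', Finset.card_insert_of_notMem
                (fun hc => hxh (Finset.mem_of_mem_erase hc)),
                Finset.card_erase_of_mem hu, hhcard]
              omega
            have hGood'' : Good r (L' ++ [h']) := by
              refine good_snoc hGood' hh'card (fun _ =>
                ⟨Sum.inr (e ii, m), Finset.mem_insert_self _ _, hxfresh, h, hhL', ?_⟩)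
              intro x hx
              rw [Finset.mem_sdiff] at hx
              obtain ⟨hx1, hx2⟩ := hx
              rw [hh', Finset.mem_insert] at hx1
              rcases hx1 with hx1 | hx1
              · exact absurd (Finset.mem_singleton.mpr hx1) hx2
              · exact Finset.mem_of_mem_erase hx1
            refine ⟨L' ++ [h'], hGood'', fun g hg => List.mem_append_left _ (hmem' g hg),
              ?_, ?_, h', List.mem_append_right _ (by simp), ?_⟩
            · intro g hg x hx
              rcases List.mem_append.mp hg with hg | hg
              · exact hC' g hg x hx
              · simp only [List.mem_singleton] at hg
                subst hg
                rw [hh', Finset.mem_insert] at hx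
                rcases hx with hx | hx
                · exact absurd hx (by simp)
                · exact hC' h hhL' x (Finset.mem_of_mem_erase hx)
            · intro g hg a m' hm'
              rcases List.mem_append.mp hg with hg | hg
              · obtain ⟨h1, h2⟩ := hD' g hg a m' hm'
                refine ⟨h1, h2.imp id (Or.imp id ?_)⟩
                rintro ⟨rfl, h3⟩
                exact ⟨rfl, by omega⟩
              · simp only [List.mem_singleton] at hg
                subst hg
                rw [hh', Finset.mem_insert] at hm'
                rcases hm' with hm' | hm'
                · rw [Sum.inr.injEq, Prod.mk.injEq] at hm'
                  exact ⟨by omega, Or.inr (Or.inr ⟨hm'.1, by omega⟩)⟩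
                · obtain ⟨h1, h2⟩ := hD' h hhL' a m' (Finset.mem_of_mem_erase hm')
                  refine ⟨h1, h2.imp id (Or.imp id ?_)⟩
                  rintro ⟨rfl, h3⟩
                  exact ⟨rfl, by omega⟩
            · intro x hx
              rw [Finset.mem_union] at hx
              rcases hx with hx | hx
              · apply Finset.mem_insert_of_mem
                refine Finset.mem_erase.mpr ⟨?_, hhsub (Finset.mem_union_left _ hx)⟩
                intro hc
                exact hunot (hc ▸ Finset.mem_union_left _ hx)
              · obtain ⟨m', hm', rfl⟩ := Finset.mem_image.mp hx
                rw [Finset.mem_range] at hm'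
                rcases Nat.lt_succ_iff_lt_or_eq.mp hm' with hm' | hm'
                · apply Finset.mem_insert_of_mem
                  have hxin : (Sum.inr (e ii, m') : V ⊕ Finset V × ℕ) ∈
                      (e ii).image Sum.inl ∪
                        (Finset.range m).image (fun m'' => Sum.inr (e ii, m'')) :=
                    Finset.mem_union_right _
                      (Finset.mem_image_of_mem _ (Finset.mem_range.mpr hm'))
                  refine Finset.mem_erase.mpr ⟨fun hc => hunot (hc ▸ hxin), hhsub hxin⟩
                · subst hm'
                  exact Finset.mem_insert_self _ _
        obtain ⟨L', hGood', hmem', hC', hD', h, hhL', hhsub⟩ := key (r - k) le_rfl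
        have hhcard : h.card = r := hGood'.1 h hhL'
        have hheq : h = (e ii).image Sum.inl ∪
            (Finset.range (r - k)).image (fun m' => Sum.inr (e ii, m')) := by
          refine (Finset.eq_of_subset_of_card_le hhsub ?_).symm
          rw [hhcard, card_inl_pad, hcard]
          omega
        refine ⟨L', hGood', ?_, ?_, hC', ?_, ?_⟩
        · intro j hj
          rcases Nat.lt_succ_iff_lt_or_eq.mp hj with hj | hj
          · obtain ⟨g, hg, hsub⟩ := hA j hj
            exact ⟨g, hmem' g (List.mem_append_left _ hg), hsub⟩
          · refine ⟨h, hhL', ?_⟩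
            rw [show j = ii from Fin.ext hj, hheq]
            exact Finset.subset_union_left
        · intro j hj hjS
          rcases Nat.lt_succ_iff_lt_or_eq.mp hj with hj | hj
          · exact hmem' _ (List.mem_append_left _ (hB j hj hjS))
          · rw [show j = ii from Fin.ext hj, ← hheq]
            exact hhL'
        · intro g hg a m hm
          obtain ⟨h1, h2⟩ := hD' g hg a m hm
          refine ⟨h1, h2.imp id ?_⟩
          rintro (⟨j, hj, hjS, rfl⟩ | ⟨rfl, h3⟩)
          · exact ⟨j, by omega, hjS, rfl⟩
          · exact ⟨ii, Nat.lt_succ_self i, hiiS, rfl⟩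
        · intro j hj hjle
          exact hmem' _ (List.mem_append_left _ (hE j (by omega) hjle))
      · -- e ii ∉ S : just the single new edge
        refine ⟨L ++ [g0], hGood1, ?_, ?_, hC1, ?_, ?_⟩
        · intro j hj
          rcases Nat.lt_succ_iff_lt_or_eq.mp hj with hj | hj
          · obtain ⟨g, hg, hsub⟩ := hA j hj
            exact ⟨g, List.mem_append_left _ hg, hsub⟩
          · refine ⟨g0, hg0mem, ?_⟩
            rw [show j = ii from Fin.ext hj]
            exact hg0sub
        · intro j hj hjS
          rcases Nat.lt_succ_iff_lt_or_eq.mp hj with hj | hj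
          · exact List.mem_append_left _ (hB j hj hjS)
          · rw [show j = ii from Fin.ext hj] at hjS
            exact absurd hjS hiiS
        · intro g hg a m hm
          obtain ⟨h1, h2⟩ := hD1 g hg a m hm
          refine ⟨h1, h2.imp id ?_⟩
          rintro ⟨j, hj, hjS, rfl⟩
          exact ⟨j, by omega, hjS, rfl⟩
        · intro j hj hjle
          exact List.mem_append_left _ (hE j (by omega) hjle)


end Build


theorem statement_19 {V : Type} [DecidableEq V] (r k : ℕ) (hk : 2 ≤ k) (hkr : k ≤ r)
    (T S : Finset (Finset V)) (hT : IsTightTree k T) (hsub : S ⊆ T)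
    (hspan : verts S = verts T) :
    ∃ T' S' : Finset (Finset (V ⊕ Finset V × ℕ)),
      IsTightTree r T' ∧ S' ⊆ T' ∧ verts S' = verts T' ∧
      IsCopyOf S' (expansion r S) := by
  classical
  by_cases hSe : S = ∅
  · subst hSe
    refine ⟨∅, ∅, ?_, Finset.Subset.refl _, rfl, ?_⟩
    · refine ⟨by simp [IsUniform], 0, Fin.elim0, fun a => a.elim0, by simp, fun i => i.elim0⟩
    · exact ⟨id, fun x _ y _ h => h, by simp [expansion]⟩
  · obtain ⟨hUnif, t, e, einj, hTimg, htree⟩ := hT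
    have hcard : ∀ i : Fin t, (e i).card = k := by
      intro i
      exact hUnif (e i) (hTimg ▸ Finset.mem_image_of_mem e (Finset.mem_univ i))
    have hS : ∀ a ∈ S, ∃ j : Fin t, e j = a := by
      intro a ha
      have := hsub ha
      rw [hTimg] at this
      obtain ⟨j, _, hj⟩ := Finset.mem_image.mp this
      exact ⟨j, hj⟩
    have hJne : (Finset.univ.filter (fun j : Fin t => e j ∈ S)).Nonempty := by
      obtain ⟨a, ha⟩ := Finset.nonempty_iff_ne_empty.mpr hSe
      obtain ⟨j, rfl⟩ := hS a ha
      exact ⟨j, Finset.mem_filter.mpr ⟨Finset.mem_univ _, ha⟩⟩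
    set j0 : Fin t := (Finset.univ.filter (fun j : Fin t => e j ∈ S)).min' hJne with hj0
    have hj0S : e j0 ∈ S :=
      (Finset.mem_filter.mp ((Finset.univ.filter (fun j : Fin t => e j ∈ S)).min'_mem hJne)).2
    have hj0min : ∀ j : Fin t, e j ∈ S → (j0:ℕ) ≤ (j:ℕ) := by
      intro j hj
      have h : j0 ≤ j := by
        rw [hj0]
        have hmem : j ∈ Finset.univ.filter (fun j : Fin t => e j ∈ S) :=
          Finset.mem_filter.mpr ⟨Finset.mem_univ _, hj⟩
        exact Finset.min'_le _ _ hmem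
      exact Fin.le_def.mp h
    obtain ⟨L, hGood, hA, hB, hC, hD, hE⟩ :=
      main_build (by omega) hkr e einj hcard htree S j0 hj0S hj0min t
        (by omega) le_rfl
    have hsub' : expansion r S ⊆ L.toFinset := by
      intro x hx
      rw [expansion, Finset.mem_image] at hx
      obtain ⟨a, haS, rfl⟩ := hx
      obtain ⟨j, rfl⟩ := hS a haS
      rw [List.mem_toFinset]
      simpa [hcard j] using hB j j.2 haS
    refine ⟨L.toFinset, expansion r S, good_isTightTree hGood, hsub', ?_, ?_⟩
    · -- verts equal
      apply Finset.Subset.antisymm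
      · exact Finset.sup_mono (f := id) hsub'
      · intro x hx
        obtain ⟨g, hgT, hxg⟩ := Finset.mem_sup.mp hx
        rw [List.mem_toFinset] at hgT
        simp only [id] at hxg
        cases x with
        | inl u =>
          obtain ⟨j, _, hu⟩ := hC g hgT u hxg
          have huT : u ∈ verts T := Finset.mem_sup.mpr
            ⟨e j, hTimg ▸ Finset.mem_image_of_mem e (Finset.mem_univ j), hu⟩
          rw [← hspan] at huT
          obtain ⟨a, haS, hua⟩ := Finset.mem_sup.mp huT
          apply Finset.mem_sup.mpr
          refine ⟨a.image Sum.inl ∪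
            (Finset.range (r - a.card)).image (fun m => Sum.inr (a, m)),
            Finset.mem_image_of_mem _ haS, ?_⟩
          simp only [id]
          exact Finset.mem_union_left _ (Finset.mem_image_of_mem _ hua)
        | inr p =>
          obtain ⟨h1, h2⟩ := hD g hgT p.1 p.2 (by rwa [Prod.mk.eta])
          have haS : p.1 ∈ S := by
            rcases h2 with h2 | ⟨j, _, hjS, h2⟩
            · rw [h2]; exact hj0S
            · rw [h2]; exact hjS
          have hacard : p.1.card = k := hUnif p.1 (hsub haS)
          apply Finset.mem_sup.mpr
          refine ⟨p.1.image Sum.inl ∪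
            (Finset.range (r - p.1.card)).image (fun m => Sum.inr (p.1, m)),
            Finset.mem_image_of_mem _ haS, ?_⟩
          simp only [id]
          apply Finset.mem_union_right
          apply Finset.mem_image.mpr
          exact ⟨p.2, Finset.mem_range.mpr (by omega), by rw [Prod.mk.eta]⟩
    · exact ⟨id, Set.injOn_id _, by simp⟩

end Paper
end
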